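/- arXiv:1707.06634 — 5 statements merged into one kernel-verified Lean document; each statement's English description precedes it below -/
import Mathlib

section
/- The height of a hyperforest τ in the hyperforest poset equals 2|V| − |E| − 2|C|, where V is the vertex set, E the hyperedge set, and C the set of connected components. In particular a hypertree on n+1 vertices with k hyperedges has height 2n − k. -/
/-!
Write `w(E) = ∑_{e ∈ E} (2|e| - 3)`. A hyperforest with at least one hyperedge has a lower cover
of weight `w - 1`: delete a hyperedge with two vertices, or split a larger hyperedge `e` into
`{x, y}` and `e \ {x}`. Conversely `w` is strictly monotone: the hyperedges of `σ` that lie in a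
fixed hyperedge `t` of `τ ≥ σ` form a hyperforest on `t`, of weight at most `2|t| - 3`, with
equality only for `{t}`. Hence the height is `w`. Both the bound and the final formula come from
`w(E) + |E| + 2|C(E)| = 2|V|` for a hyperforest, i.e. `∑ (|e| - 1) = |V| - |C(E)|`, which holds
because deleting a hyperedge `e` of a hyperforest splits one component into `|e|` components.
-/

/-- An alternating path in a hypergraph: a list of vertices and a list of hyperedges,
with each hyperedge belonging to the hypergraph and containing the two vertices around it. -/
def IsHyperPath {V : Type*} (E : Finset (Finset V)) : List V → List (Finset V) → Prop
  | [_], [] => True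
  | u :: v :: vs, e :: es => e ∈ E ∧ u ∈ e ∧ v ∈ e ∧ IsHyperPath E (v :: vs) es
  | _, _ => False

/-- Two vertices are joined by a path in the hypergraph. -/
def Reachable {V : Type*} (E : Finset (Finset V)) (u v : V) : Prop :=
  ∃ vs es, IsHyperPath E vs es ∧ vs.head? = some u ∧ vs.getLast? = some v

/-- Every pair of vertices is joined by a path. -/
def Connected {V : Type*} (E : Finset (Finset V)) : Prop := ∀ u v, Reachable E u v

/-- A nontrivial simple cycle: a closed path of length at least two with distinct
hyperedges and distinct vertices except that the endpoints are equal. -/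
def HasSimpleCycle {V : Type*} (E : Finset (Finset V)) : Prop :=
  ∃ (vs : List V) (es : List (Finset V)), IsHyperPath E vs es ∧ 2 ≤ es.length ∧
    es.Nodup ∧ vs.dropLast.Nodup ∧ vs.head? = vs.getLast?

/-- A hyperforest: hyperedges have size at least two and there are no nontrivial simple cycles. -/
def IsHyperforest {V : Type*} (E : Finset (Finset V)) : Prop :=
  (∀ e ∈ E, 2 ≤ e.card) ∧ ¬ HasSimpleCycle E

/-- A hypertree is a connected hyperforest. -/
def IsHypertree {V : Type*} (E : Finset (Finset V)) : Prop := IsHyperforest E ∧ Connected E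

/-- The hyperforest poset on a fixed vertex set: σ ≤ τ iff every hyperedge of σ is
contained in some hyperedge of τ. -/
instance hyperforestPreorder {V : Type*} : Preorder {E : Finset (Finset V) // IsHyperforest E} where
  le σ τ := ∀ e ∈ σ.1, ∃ f ∈ τ.1, e ⊆ f
  lt σ τ := (∀ e ∈ σ.1, ∃ f ∈ τ.1, e ⊆ f) ∧ ¬ (∀ e ∈ τ.1, ∃ f ∈ σ.1, e ⊆ f)
  le_refl σ e he := ⟨e, he, subset_rfl⟩
  le_trans σ τ ρ h1 h2 e he := by
    obtain ⟨f, hf, hef⟩ := h1 e he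
    obtain ⟨g, hg, hfg⟩ := h2 f hf
    exact ⟨g, hg, hef.trans hfg⟩
  lt_iff_le_not_ge σ τ := Iff.rfl

section

open Finset

variable {V : Type*}

theorem List.exists_append_cons_of_not_nodup {α : Type*} :
    ∀ {l : List α}, ¬ l.Nodup → ∃ xs a ys, l = xs ++ a :: ys ∧ a ∈ ys
  | [], h => absurd List.nodup_nil h
  | a :: l, h => by
      by_cases ha : a ∈ l
      · exact ⟨[], a, l, rfl, ha⟩
      · obtain ⟨xs, b, ys, rfl, hb⟩ :=
          exists_append_cons_of_not_nodup fun hl => h (List.nodup_cons.2 ⟨ha, hl⟩)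
        exact ⟨a :: xs, b, ys, rfl, hb⟩

namespace IsHyperPath

variable {E : Finset (Finset V)} {u v : V} {vs : List V} {e : Finset V} {es : List (Finset V)}

theorem not_nil : ¬ IsHyperPath E [] es := by
  cases es <;> simp [IsHyperPath]

theorem singleton_iff : IsHyperPath E [u] es ↔ es = [] := by
  cases es <;> simp [IsHyperPath]

theorem not_cons_cons_nil : ¬ IsHyperPath E (u :: v :: vs) [] := by
  simp [IsHyperPath]

theorem length_eq : ∀ {vs : List V} {es : List (Finset V)},
    IsHyperPath E vs es → vs.length = es.length + 1
  | [], _, h => (not_nil h).elim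
  | [_], _, h => by simp [singleton_iff.1 h]
  | _ :: _ :: _, [], h => (not_cons_cons_nil h).elim
  | _ :: _ :: _, _ :: _, h => by simp [length_eq h.2.2.2]

theorem mem_of_mem : ∀ {vs : List V} {es : List (Finset V)},
    IsHyperPath E vs es → e ∈ es → e ∈ E
  | [], _, h, _ => (not_nil h).elim
  | [_], _, h, he => by simp [singleton_iff.1 h] at he
  | _ :: _ :: _, [], h, _ => (not_cons_cons_nil h).elim
  | _ :: _ :: _, _ :: _, h, he => by
      rcases List.mem_cons.1 he with rfl | he
      exacts [h.1, mem_of_mem h.2.2.2 he]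

theorem map_edges {E' : Finset (Finset V)} (ψ : Finset V → Finset V) :
    ∀ {vs : List V} {es : List (Finset V)}, IsHyperPath E vs es →
      (∀ e ∈ es, ψ e ∈ E' ∧ e ⊆ ψ e) → IsHyperPath E' vs (es.map ψ)
  | [], _, h, _ => (not_nil h).elim
  | [_], _, h, _ => by simp [singleton_iff.1 h, IsHyperPath]
  | _ :: _ :: _, [], h, _ => (not_cons_cons_nil h).elim
  | _ :: _ :: _, e :: _, h, hψ => by
      obtain ⟨hψE, hsub⟩ := hψ e (by simp)
      exact ⟨hψE, hsub h.2.1, hsub h.2.2.1,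
        map_edges ψ h.2.2.2 fun f hf => hψ f (List.mem_cons_of_mem e hf)⟩

theorem of_forall_mem {E' : Finset (Finset V)} (h : IsHyperPath E vs es)
    (hes : ∀ e ∈ es, e ∈ E') : IsHyperPath E' vs es := by
  simpa using h.map_edges id fun e he => ⟨hes e he, subset_rfl⟩

theorem mono {E' : Finset (Finset V)} (hE : E ⊆ E') (h : IsHyperPath E vs es) :
    IsHyperPath E' vs es :=
  h.of_forall_mem fun _ he => hE (h.mem_of_mem he)

theorem append : ∀ {xs : List V} {a : V} {ys : List V} {es₁ es₂ : List (Finset V)},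
    IsHyperPath E (xs ++ [a]) es₁ → IsHyperPath E (a :: ys) es₂ →
    IsHyperPath E (xs ++ a :: ys) (es₁ ++ es₂)
  | [], _, _, _, _, h₁, h₂ => by simpa [singleton_iff.1 h₁] using h₂
  | [_], _, _, [], _, h₁, _ => (not_cons_cons_nil h₁).elim
  | [u], a, ys, e :: es₁, es₂, h₁, h₂ => by
      obtain ⟨he, hu, ha, h₁⟩ := h₁
      rw [singleton_iff.1 h₁]
      exact ⟨he, hu, ha, h₂⟩
  | _ :: _ :: _, _, _, [], _, h₁, _ => (not_cons_cons_nil h₁).elim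
  | _ :: v :: xs, a, ys, _ :: _, _, h₁, h₂ =>
      ⟨h₁.1, h₁.2.1, h₁.2.2.1, append (xs := v :: xs) h₁.2.2.2 h₂⟩

theorem split_vertex : ∀ {xs : List V} {a : V} {ys : List V} {es : List (Finset V)},
    IsHyperPath E (xs ++ a :: ys) es →
    ∃ es₁ es₂, es = es₁ ++ es₂ ∧ es₁.length = xs.length ∧
      IsHyperPath E (xs ++ [a]) es₁ ∧ IsHyperPath E (a :: ys) es₂
  | [], _, _, es, h => ⟨[], es, rfl, rfl, trivial, h⟩
  | [_], _, _, [], h => (not_cons_cons_nil h).elim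
  | [_], _, _, e :: es, h => ⟨[e], es, rfl, rfl, ⟨h.1, h.2.1, h.2.2.1, trivial⟩, h.2.2.2⟩
  | _ :: _ :: _, _, _, [], h => (not_cons_cons_nil h).elim
  | _ :: v :: xs, _, _, e :: _, h => by
      obtain ⟨es₁, es₂, rfl, hlen, h₁, h₂⟩ := split_vertex (xs := v :: xs) h.2.2.2
      exact ⟨e :: es₁, es₂, rfl, by simp [hlen], ⟨h.1, h.2.1, h.2.2.1, h₁⟩, h₂⟩

theorem split_edge : ∀ {ps : List (Finset V)} {f : Finset V} {qs : List (Finset V)} {vs : List V},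
    IsHyperPath E vs (ps ++ f :: qs) →
    ∃ xs u v ys, vs = xs ++ u :: v :: ys ∧
      IsHyperPath E (xs ++ [u]) ps ∧ f ∈ E ∧ u ∈ f ∧ v ∈ f ∧ IsHyperPath E (v :: ys) qs
  | _, _, _, [], h => (not_nil h).elim
  | _, _, _, [_], h => by simp [singleton_iff] at h
  | [], _, _, u :: v :: ys, h => ⟨[], u, v, ys, rfl, trivial, h.1, h.2.1, h.2.2.1, h.2.2.2⟩
  | p :: ps, _, _, u :: v :: ys, h => by
      obtain ⟨xs, u', v', ys', heq, h₁, hf, hu', hv', h₂⟩ := split_edge h.2.2.2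
      refine ⟨u :: xs, u', v', ys', by rw [heq]; rfl, ?_, hf, hu', hv', h₂⟩
      cases xs with
      | nil =>
        obtain rfl : v = u' := (List.cons_eq_cons.1 heq).1
        exact ⟨h.1, h.2.1, h.2.2.1, h₁⟩
      | cons w xs =>
        obtain rfl : v = w := (List.cons_eq_cons.1 heq).1
        exact ⟨h.1, h.2.1, h.2.2.1, h₁⟩

theorem reverse : ∀ {vs : List V} {es : List (Finset V)},
    IsHyperPath E vs es → IsHyperPath E vs.reverse es.reverse
  | [], _, h => (not_nil h).elim
  | [_], _, h => by simp [singleton_iff.1 h, IsHyperPath]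
  | _ :: _ :: _, [], h => (not_cons_cons_nil h).elim
  | u :: v :: vs, e :: es, h => by
      have hrev := reverse h.2.2.2
      rw [List.reverse_cons] at hrev
      simpa using hrev.append (ys := [u]) (es₂ := [e]) ⟨h.1, h.2.2.1, h.2.1, trivial⟩

theorem reflTransGen :
    ∀ {vs : List V} {es : List (Finset V)} {u v : V}, IsHyperPath E vs es →
      vs.head? = some u → vs.getLast? = some v →
      Relation.ReflTransGen (fun a b => ∃ e ∈ E, a ∈ e ∧ b ∈ e) u v
  | [], _, _, _, h, _, _ => (not_nil h).elim
  | [_], _, _, _, _, hu, hv => by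
      obtain rfl := Option.some.inj hu
      obtain rfl := Option.some.inj hv
      rfl
  | _ :: _ :: _, [], _, _, h, _, _ => (not_cons_cons_nil h).elim
  | _ :: _ :: _, e :: _, _, _, h, hu, hv => by
      obtain rfl := Option.some.inj hu
      exact .head ⟨e, h.1, h.2.1, h.2.2.1⟩ (h.2.2.2.reflTransGen rfl (by simpa using hv))

theorem exists_shorter_of_not_nodup_vertices (hp : IsHyperPath E vs es) (hvs : ¬ vs.Nodup) :
    ∃ vs' es', IsHyperPath E vs' es' ∧ vs'.head? = vs.head? ∧ vs'.getLast? = vs.getLast? ∧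
      es'.length < es.length := by
  obtain ⟨xs, a, ys, rfl, ha⟩ := List.exists_append_cons_of_not_nodup hvs
  obtain ⟨ys₁, ys₂, rfl⟩ := List.append_of_mem ha
  obtain ⟨es₁, es₂, rfl, -, hp₁, hp₂⟩ := hp.split_vertex
  obtain ⟨es₃, es₄, rfl, hlen, -, hp₄⟩ := split_vertex (xs := a :: ys₁) hp₂
  refine ⟨xs ++ a :: ys₂, es₁ ++ es₄, hp₁.append hp₄, by cases xs <;> rfl, ?_, ?_⟩
  · rw [List.getLast?_append_cons, List.getLast?_append_cons,
      ← List.cons_append, List.getLast?_append_cons]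
  · simp only [List.length_append, List.length_cons] at hlen ⊢
    omega

theorem exists_shorter_of_not_nodup_edges (hp : IsHyperPath E vs es) (hes : ¬ es.Nodup) :
    ∃ vs' es', IsHyperPath E vs' es' ∧ vs'.head? = vs.head? ∧ vs'.getLast? = vs.getLast? ∧
      es'.length < es.length := by
  obtain ⟨ps, f, qs, rfl, hf⟩ := List.exists_append_cons_of_not_nodup hes
  obtain ⟨qs₁, qs₂, rfl⟩ := List.append_of_mem hf
  obtain ⟨xs, u, v, ys, rfl, hp₁, hfE, hu, -, hp₂⟩ := hp.split_edge
  obtain ⟨xs₂, p, q, ys₂, hys, -, -, -, hq, hp₃⟩ := hp₂.split_edge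
  refine ⟨xs ++ u :: q :: ys₂, ps ++ f :: qs₂, hp₁.append ⟨hfE, hu, hq, hp₃⟩,
    by cases xs <;> rfl, ?_, by simp⟩
  rw [List.getLast?_append_cons, List.getLast?_append_cons, List.getLast?_cons_cons,
    List.getLast?_cons_cons, hys, List.getLast?_append_cons, List.getLast?_cons_cons]

theorem exists_nodup (hp : IsHyperPath E vs es) :
    ∃ vs' es', IsHyperPath E vs' es' ∧ vs'.head? = vs.head? ∧ vs'.getLast? = vs.getLast? ∧
      vs'.Nodup ∧ es'.Nodup := by
  induction hn : es.length using Nat.strong_induction_on generalizing vs es with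
  | _ n ih =>
    by_cases hnodup : vs.Nodup ∧ es.Nodup
    · exact ⟨vs, es, hp, rfl, rfl, hnodup⟩
    obtain ⟨vs', es', hp', hhead, hlast, hlen⟩ :=
      (em vs.Nodup).elim (fun hvs => hp.exists_shorter_of_not_nodup_edges (hnodup ⟨hvs, ·⟩))
        hp.exists_shorter_of_not_nodup_vertices
    obtain ⟨vs'', es'', hp'', hhead', hlast', hnodup'⟩ := ih _ (hn ▸ hlen) hp' rfl
    exact ⟨vs'', es'', hp'', hhead'.trans hhead, hlast'.trans hlast, hnodup'⟩

end IsHyperPath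

namespace Reachable

variable {E E' : Finset (Finset V)} {u v w : V}

theorem refl (u : V) : Reachable E u u :=
  ⟨[u], [], trivial, rfl, rfl⟩

theorem of_mem {e : Finset V} (he : e ∈ E) (hu : u ∈ e) (hv : v ∈ e) : Reachable E u v :=
  ⟨[u, v], [e], ⟨he, hu, hv, trivial⟩, rfl, rfl⟩

theorem symm (h : Reachable E u v) : Reachable E v u := by
  obtain ⟨vs, es, hp, hu, hv⟩ := h
  exact ⟨vs.reverse, es.reverse, hp.reverse, by simpa using hv, by simpa using hu⟩

theorem trans (h₁ : Reachable E u v) (h₂ : Reachable E v w) : Reachable E u w := by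
  obtain ⟨vs₁, es₁, hp₁, hu, hv⟩ := h₁
  obtain ⟨_ | ⟨v', vs₂⟩, es₂, hp₂, hv', hw⟩ := h₂
  · simp at hv'
  have hv'v : v = v' := by simpa using hv'.symm
  subst hv'v
  have hvs₁ : vs₁.dropLast ++ [v] = vs₁ := List.dropLast_append_getLast? v hv
  refine ⟨vs₁.dropLast ++ v :: vs₂, es₁ ++ es₂, (hvs₁ ▸ hp₁).append hp₂, ?_, ?_⟩
  · rw [← hvs₁] at hu
    generalize vs₁.dropLast = l at hu ⊢
    cases l <;> simpa using hu
  · rwa [List.getLast?_append_cons]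

theorem mono (hE : ∀ e ∈ E, ∃ f ∈ E', e ⊆ f) (h : Reachable E u v) : Reachable E' u v := by
  classical
  obtain ⟨vs, es, hp, hu, hv⟩ := h
  choose! ψ hψ using hE
  exact ⟨vs, es.map ψ, hp.map_edges ψ fun e he => hψ e (hp.mem_of_mem he), hu, hv⟩

theorem mono_of_subset (hE : E ⊆ E') (h : Reachable E u v) : Reachable E' u v :=
  h.mono fun e he => ⟨e, hE he, subset_rfl⟩

theorem reflTransGen (h : Reachable E u v) :
    Relation.ReflTransGen (fun a b => ∃ e ∈ E, a ∈ e ∧ b ∈ e) u v := by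
  obtain ⟨vs, es, hp, hu, hv⟩ := h
  exact hp.reflTransGen hu hv

theorem exists_nodup (h : Reachable E u v) :
    ∃ vs es, IsHyperPath E vs es ∧ vs.head? = some u ∧ vs.getLast? = some v ∧
      vs.Nodup ∧ es.Nodup := by
  obtain ⟨vs, es, hp, hu, hv⟩ := h
  obtain ⟨vs', es', hp', hu', hv', hnodup⟩ := hp.exists_nodup
  exact ⟨vs', es', hp', hu'.trans hu, hv'.trans hv, hnodup⟩

end Reachable

theorem reachable_empty_iff {u v : V} : Reachable (∅ : Finset (Finset V)) u v ↔ u = v := by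
  refine ⟨fun ⟨vs, es, hp, hu, hv⟩ => ?_, fun h => h ▸ Reachable.refl u⟩
  match vs, es, hp with
  | [x], [], _ => simp_all
  | _ :: _ :: _, _ :: _, hp => exact absurd hp.1 (notMem_empty _)

theorem reachable_insert_iff [DecidableEq V] {E : Finset (Finset V)} {e : Finset V} {u v : V} :
    Reachable (insert e E) u v ↔
      Reachable E u v ∨ (∃ a ∈ e, Reachable E u a) ∧ ∃ b ∈ e, Reachable E v b := by
  refine ⟨fun h => ?_, ?_⟩
  · have hr := h.reflTransGen
    clear h
    induction hr with
    | refl => exact .inl (.refl u)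
    | @tail b c _ hbc ih =>
      obtain ⟨f, hf, hb, hc⟩ := hbc
      rcases mem_insert.1 hf with rfl | hf
      · refine .inr ⟨?_, c, hc, .refl c⟩
        rcases ih with hub | ⟨hu, -⟩
        exacts [⟨b, hb, hub⟩, hu]
      · have hbc : Reachable E b c := .of_mem hf hb hc
        rcases ih with hub | ⟨hu, a, ha, hba⟩
        exacts [.inl (hub.trans hbc), .inr ⟨hu, a, ha, hbc.symm.trans hba⟩]
  · have hE := subset_insert e E
    rintro (h | ⟨⟨a, ha, hua⟩, b, hb, hvb⟩)
    · exact h.mono_of_subset hE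
    · exact ((hua.mono_of_subset hE).trans (.of_mem (mem_insert_self e E) ha hb)).trans
        (hvb.mono_of_subset hE).symm

section Acyclic

variable [DecidableEq V] {E E' : Finset (Finset V)} {e f : Finset V} {u v : V}

def IsAcyclic (E : Finset (Finset V)) : Prop :=
  ∀ e ∈ E, ∀ u ∈ e, ∀ v ∈ e, u ≠ v → ¬ Reachable (E.erase e) u v

theorem hasSimpleCycle_of_reachable_erase (he : e ∈ E) (hu : u ∈ e) (hv : v ∈ e) (huv : u ≠ v)
    (hr : Reachable (E.erase e) u v) : HasSimpleCycle E := by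
  obtain ⟨vs, es, hp, hu', hv', hvs, hes⟩ := hr.exists_nodup
  obtain ⟨t, rfl⟩ : ∃ t, vs = u :: t := ⟨vs.tail, List.eq_cons_of_mem_head? hu'⟩
  have hvs_eq : (u :: t).dropLast ++ [v] = u :: t := List.dropLast_append_getLast? v hv'
  have hcycle : IsHyperPath E ((u :: t).dropLast ++ [v, u]) (es ++ [e]) :=
    (hvs_eq ▸ hp.mono (erase_subset e E)).append ⟨he, hv, hu, trivial⟩
  rw [show [v, u] = [v] ++ [u] from rfl, ← List.append_assoc, hvs_eq] at hcycle
  refine ⟨u :: t ++ [u], es ++ [e], hcycle, ?_, ?_, by rwa [List.dropLast_concat],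
    by rw [List.getLast?_concat]; rfl⟩
  · have hes_ne : es ≠ [] := by
      rintro rfl
      obtain rfl : t = [] := by simpa using hp.length_eq
      exact huv (by simpa using hv')
    simpa [Nat.one_le_iff_ne_zero] using hes_ne
  · exact hes.append (List.nodup_singleton e) (List.disjoint_singleton.2 fun h =>
      notMem_erase e E (hp.mem_of_mem h))

theorem HasSimpleCycle.exists_reachable_erase (h : HasSimpleCycle E) :
    ∃ e ∈ E, ∃ u ∈ e, ∃ v ∈ e, u ≠ v ∧ Reachable (E.erase e) u v := by
  obtain ⟨vs, _ | ⟨e, es⟩, hp, hlen, hes, hvs, hcyc⟩ := h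
  · simp at hlen
  obtain _ | ⟨x, _ | ⟨y, vs⟩⟩ := vs
  · exact (IsHyperPath.not_nil hp).elim
  · simp [IsHyperPath.singleton_iff] at hp
  have hvs_ne : vs ≠ [] := by
    rintro rfl
    have := hp.length_eq
    simp only [List.length_cons, List.length_nil] at this hlen
    omega
  rw [List.dropLast_cons_of_ne_nil (List.cons_ne_nil y vs),
    List.dropLast_cons_of_ne_nil hvs_ne] at hvs
  have hxy : x ≠ y := fun hxy => (List.nodup_cons.1 hvs).1 (hxy ▸ List.mem_cons_self)
  have hp' : IsHyperPath (E.erase e) (y :: vs) es := hp.2.2.2.of_forall_mem fun f hf =>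
    mem_erase.2 ⟨fun hfe => (List.nodup_cons.1 hes).1 (hfe ▸ hf), hp.2.2.2.mem_of_mem hf⟩
  rw [List.getLast?_cons_cons] at hcyc
  exact ⟨e, hp.1, x, hp.2.1, y, hp.2.2.1, hxy, Reachable.symm ⟨y :: vs, es, hp', rfl, hcyc.symm⟩⟩

theorem isAcyclic_iff_not_hasSimpleCycle : IsAcyclic E ↔ ¬ HasSimpleCycle E := by
  refine ⟨fun h hc => ?_, fun h e he u hu v hv huv hr =>
    h (hasSimpleCycle_of_reachable_erase he hu hv huv hr)⟩
  obtain ⟨e, he, u, hu, v, hv, huv, hr⟩ := hc.exists_reachable_erase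
  exact h e he u hu v hv huv hr

namespace IsAcyclic

theorem mono (h : IsAcyclic E) (hE' : E' ⊆ E) : IsAcyclic E' := fun e he u hu v hv huv hr =>
  h e (hE' he) u hu v hv huv (hr.mono_of_subset (erase_subset_erase e hE'))

theorem reachable_erase_iff (h : IsAcyclic E) (he : e ∈ E) (hu : u ∈ e) (hv : v ∈ e) :
    Reachable (E.erase e) u v ↔ u = v :=
  ⟨fun hr => by_contra fun huv => h e he u hu v hv huv hr, fun huv => huv ▸ Reachable.refl u⟩

theorem card_inter_le_one (h : IsAcyclic E) (he : e ∈ E) (hf : f ∈ E) (hef : e ≠ f) :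
    #(e ∩ f) ≤ 1 := by
  refine card_le_one.2 fun u hu v hv => ?_
  rw [mem_inter] at hu hv
  exact (h.reachable_erase_iff he hu.1 hv.1).1
    (Reachable.of_mem (mem_erase.2 ⟨hef.symm, hf⟩) hu.2 hv.2)

end IsAcyclic

theorem IsHyperforest.isAcyclic (h : IsHyperforest E) : IsAcyclic E :=
  isAcyclic_iff_not_hasSimpleCycle.2 h.2

end Acyclic

section Components

variable [Fintype V] {E : Finset (Finset V)} {e t : Finset V} {u v w : V}

open Classical in
noncomputable def component (E : Finset (Finset V)) (v : V) : Finset V :=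
  {w | Reachable E v w}

theorem mem_component : w ∈ component E v ↔ Reachable E v w := by
  simp [component]

theorem component_eq_component_iff : component E u = component E v ↔ Reachable E u v := by
  refine ⟨fun h => mem_component.1 (h ▸ mem_component.2 (.refl v)), fun h => ?_⟩
  ext w
  simp only [mem_component]
  exact ⟨h.symm.trans, h.trans⟩

theorem nat_card_quot_reachable [DecidableEq V] (E : Finset (Finset V)) :
    Nat.card (Quot (Reachable E)) = #(univ.image (component E)) := by
  rw [← Nat.card_eq_finsetCard]
  refine Nat.card_congr (Equiv.ofBijective
    (Quot.lift (fun v => ⟨component E v, mem_image_of_mem _ (mem_univ v)⟩)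
      fun u v h => Subtype.ext (component_eq_component_iff.2 h)) ⟨?_, ?_⟩)
  · rintro ⟨u⟩ ⟨v⟩ h
    exact Quot.sound (component_eq_component_iff.1 (Subtype.ext_iff.1 h))
  · rintro ⟨s, hs⟩
    obtain ⟨v, -, rfl⟩ := mem_image.1 hs
    exact ⟨Quot.mk _ v, rfl⟩

theorem card_image_component_empty [DecidableEq V] (t : Finset V) :
    #(t.image (component (∅ : Finset (Finset V)))) = #t := by
  refine card_image_of_injective _ fun u v h => ?_
  exact reachable_empty_iff.1 (component_eq_component_iff.1 h)

variable [DecidableEq V]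

theorem component_insert_of_disjoint (h : Disjoint e (component E v)) :
    component (insert e E) v = component E v := by
  ext w
  simp only [mem_component, reachable_insert_iff]
  refine ⟨?_, .inl⟩
  rintro (hvw | ⟨⟨a, ha, hva⟩, -⟩)
  exacts [hvw, (disjoint_left.1 h ha (mem_component.2 hva)).elim]

theorem filter_disjoint_image_component_insert :
    (t.image (component (insert e E))).filter (Disjoint e) =
      (t.image (component E)).filter (Disjoint e) := by
  ext s
  simp only [mem_filter, mem_image]
  constructor
  · rintro ⟨⟨v, hv, rfl⟩, hdisj⟩
    have hdisj' : Disjoint e (component E v) := hdisj.mono_right fun w hw =>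
      mem_component.2 ((mem_component.1 hw).mono_of_subset (subset_insert e E))
    exact ⟨⟨v, hv, (component_insert_of_disjoint hdisj').symm⟩, hdisj⟩
  · rintro ⟨⟨v, hv, rfl⟩, hdisj⟩
    exact ⟨⟨v, hv, component_insert_of_disjoint hdisj⟩, hdisj⟩

theorem filter_not_disjoint_image_component (he : e ⊆ t) :
    (t.image (component E)).filter (¬ Disjoint e ·) = e.image (component E) := by
  ext s
  simp only [mem_filter, mem_image, not_disjoint_iff]
  constructor
  · rintro ⟨⟨v, -, rfl⟩, a, ha, hva⟩
    exact ⟨a, ha, component_eq_component_iff.2 (mem_component.1 hva).symm⟩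
  · rintro ⟨a, ha, rfl⟩
    exact ⟨⟨a, he ha, rfl⟩, a, ha, mem_component.2 (.refl a)⟩

theorem card_image_component_insert (he : e ⊆ t) (hne : e.Nonempty)
    (hsep : ∀ u ∈ e, ∀ v ∈ e, u ≠ v → ¬ Reachable E u v) :
    #(t.image (component (insert e E))) + #e = #(t.image (component E)) + 1 := by
  have hmerged : #(e.image (component (insert e E))) = 1 := by
    refine le_antisymm (card_le_one.2 ?_) (hne.image _).card_pos
    simp only [mem_image]
    rintro _ ⟨a, ha, rfl⟩ _ ⟨b, hb, rfl⟩
    exact component_eq_component_iff.2 (.of_mem (mem_insert_self e E) ha hb)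
  have hseparate : #(e.image (component E)) = #e :=
    card_image_of_injOn fun a ha b hb hab =>
      by_contra fun hne => hsep a ha b hb hne (component_eq_component_iff.1 hab)
  rw [← card_filter_add_card_filter_not (Disjoint e),
    ← card_filter_add_card_filter_not (s := t.image (component E)) (Disjoint e),
    filter_disjoint_image_component_insert, filter_not_disjoint_image_component he,
    filter_not_disjoint_image_component he, hmerged, hseparate]
  ring

end Components

theorem IsAcyclic.sum_card_add_card_image_component [Fintype V] [DecidableEq V]
    {E : Finset (Finset V)} {t : Finset V} (h : IsAcyclic E) (hne : ∀ e ∈ E, e.Nonempty)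
    (ht : ∀ e ∈ E, e ⊆ t) :
    ∑ e ∈ E, #e + #(t.image (component E)) = #t + #E := by
  induction E using Finset.induction_on with
  | empty => simp [card_image_component_empty]
  | @insert e E heE ih =>
    have hsep : ∀ u ∈ e, ∀ v ∈ e, u ≠ v → ¬ Reachable E u v := by
      simpa [erase_insert heE] using h e (mem_insert_self e E)
    have hcount := card_image_component_insert (ht e (mem_insert_self e E))
      (hne e (mem_insert_self e E)) hsep
    have ih := ih (h.mono (subset_insert e E))
      (fun f hf => hne f (mem_insert_of_mem hf)) (fun f hf => ht f (mem_insert_of_mem hf))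
    rw [sum_insert heE, card_insert_of_notMem heE]
    omega

/-- The truncated subtraction is harmless on hyperforests, whose hyperedges have at least two
vertices. -/
def weight (E : Finset (Finset V)) : ℕ :=
  ∑ e ∈ E, (2 * #e - 3)

theorem nonempty_of_weight_ne_zero {E : Finset (Finset V)} (h : weight E ≠ 0) : E.Nonempty :=
  nonempty_of_sum_ne_zero h

theorem weight_add_three_mul_card {E : Finset (Finset V)} (h : ∀ e ∈ E, 2 ≤ #e) :
    weight E + 3 * #E = 2 * ∑ e ∈ E, #e := by
  rw [weight, card_eq_sum_ones, mul_sum, mul_sum, ← sum_add_distrib]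
  exact sum_congr rfl fun e he => by have := h e he; omega

theorem IsHyperforest.weight_add_card_add_two_mul_card_image_component [Fintype V]
    [DecidableEq V] {E : Finset (Finset V)} {t : Finset V} (h : IsHyperforest E)
    (ht : ∀ e ∈ E, e ⊆ t) :
    weight E + #E + 2 * #(t.image (component E)) = 2 * #t := by
  have hcount := h.isAcyclic.sum_card_add_card_image_component
    (fun e he => card_pos.1 (by have := h.1 e he; omega)) ht
  have := weight_add_three_mul_card h.1
  omega

theorem HasSimpleCycle.mono {E E' : Finset (Finset V)} (hE : E ⊆ E') (h : HasSimpleCycle E) :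
    HasSimpleCycle E' := by
  obtain ⟨vs, es, hp, hrest⟩ := h
  exact ⟨vs, es, hp.mono hE, hrest⟩

theorem IsHyperforest.mono {E E' : Finset (Finset V)} (h : IsHyperforest E) (hE' : E' ⊆ E) :
    IsHyperforest E' :=
  ⟨fun e he => h.1 e (hE' he), fun hc => h.2 (hc.mono hE')⟩

section Bounds

variable [Fintype V] {S : Finset (Finset V)} {t : Finset V}

theorem IsHyperforest.weight_le_of_forall_subset (h : IsHyperforest S) (hS : ∀ f ∈ S, f ⊆ t)
    (ht : 2 ≤ #t) : weight S ≤ 2 * #t - 3 := by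
  classical
  obtain rfl | ⟨f, hf⟩ := S.eq_empty_or_nonempty
  · exact Nat.zero_le _
  have hcomp : 0 < #(t.image (component S)) :=
    ((card_pos.1 (by omega : 0 < #t)).image _).card_pos
  have hcard : 0 < #S := card_pos.2 ⟨f, hf⟩
  have := h.weight_add_card_add_two_mul_card_image_component hS
  omega

theorem IsHyperforest.weight_lt_of_forall_subset (h : IsHyperforest S) (hS : ∀ f ∈ S, f ⊆ t)
    (ht : 2 ≤ #t) (htS : t ∉ S) : weight S < 2 * #t - 3 := by
  classical
  obtain rfl | ⟨f, hf⟩ := S.eq_empty_or_nonempty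
  · simp only [weight, sum_empty]
    omega
  have hcomp : 0 < #(t.image (component S)) :=
    ((card_pos.1 (by omega : 0 < #t)).image _).card_pos
  have hcount := h.weight_add_card_add_two_mul_card_image_component hS
  by_contra hge
  obtain ⟨f, rfl⟩ : ∃ f, S = {f} := card_eq_one.1 (by
    have := card_pos.2 ⟨f, hf⟩
    omega)
  have hft : f ⊆ t := hS f (mem_singleton_self f)
  have hcard : #f = #t := by
    simp only [weight, sum_singleton, card_singleton] at hcount hge
    omega
  exact htS (eq_of_subset_of_card_le hft hcard.ge ▸ mem_singleton_self f)

end Bounds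

theorem weight_strictMono [Fintype V] :
    StrictMono fun τ : {E : Finset (Finset V) // IsHyperforest E} => weight τ.1 := by
  classical
  rintro ⟨σ, hσ⟩ ⟨τ, hτ⟩ ⟨hle, hnge⟩
  choose! φ hφτ hφ using hle
  push Not at hnge
  obtain ⟨t₀, ht₀, ht₀σ⟩ := hnge
  have hfiber : ∀ t ∈ τ, IsHyperforest (σ.filter (φ · = t)) ∧ ∀ f ∈ σ.filter (φ · = t), f ⊆ t :=
    fun t _ => ⟨hσ.mono (filter_subset _ σ), fun f hf => by
      obtain ⟨hfσ, rfl⟩ := mem_filter.1 hf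
      exact hφ f hfσ⟩
  calc weight σ = ∑ t ∈ τ, weight (σ.filter (φ · = t)) :=
        (sum_fiberwise_of_maps_to hφτ _).symm
    _ < ∑ t ∈ τ, (2 * #t - 3) := by
      refine sum_lt_sum (fun t ht => ?_) ⟨t₀, ht₀, ?_⟩
      · exact (hfiber t ht).1.weight_le_of_forall_subset (hfiber t ht).2 (hτ.1 t ht)
      · refine (hfiber t₀ ht₀).1.weight_lt_of_forall_subset (hfiber t₀ ht₀).2 (hτ.1 t₀ ht₀) ?_
        exact fun h => ht₀σ t₀ (mem_of_mem_filter t₀ h) subset_rfl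

section Covers

variable [DecidableEq V] {E : Finset (Finset V)} {e f g e₁ e₂ : Finset V}

theorem weight_insert (he : e ∉ E) : weight (insert e E) = 2 * #e - 3 + weight E :=
  sum_insert he

theorem weight_erase_add (he : e ∈ E) : weight (E.erase e) + (2 * #e - 3) = weight E :=
  sum_erase_add E _ he

theorem IsAcyclic.not_subset_of_mem_erase (h : IsAcyclic E) (he : e ∈ E) (hg : g ∈ E.erase e)
    (hf : 2 ≤ #f) (hfe : f ⊆ e) : ¬ f ⊆ g := fun hfg => by
  have := h.card_inter_le_one he (mem_of_mem_erase hg) (ne_of_mem_erase hg).symm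
  have := card_le_card (subset_inter hfe hfg)
  omega

theorem IsAcyclic.eq_of_reachable_insert_erase (h : IsAcyclic E) (he : e ∈ E) (he₁ : e₁ ⊆ e)
    (he₂ : e₂ ⊆ e) (hinter : #(e₁ ∩ e₂) ≤ 1) {u v : V} (hu : u ∈ e₁) (hv : v ∈ e₁)
    (hr : Reachable (insert e₂ (E.erase e)) u v) : u = v := by
  rcases reachable_insert_iff.1 hr with huv | ⟨⟨a, ha, hua⟩, b, hb, hvb⟩
  · exact (h.reachable_erase_iff he (he₁ hu) (he₁ hv)).1 huv
  · obtain rfl := (h.reachable_erase_iff he (he₁ hu) (he₂ ha)).1 hua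
    obtain rfl := (h.reachable_erase_iff he (he₁ hv) (he₂ hb)).1 hvb
    exact card_le_one.1 hinter u (mem_inter.2 ⟨hu, ha⟩) v (mem_inter.2 ⟨hv, hb⟩)

theorem IsHyperforest.split (h : IsHyperforest E) (he : e ∈ E) (he₁ : e₁ ⊆ e) (he₂ : e₂ ⊆ e)
    (hinter : #(e₁ ∩ e₂) ≤ 1) (hcard₁ : 2 ≤ #e₁) (hcard₂ : 2 ≤ #e₂) :
    IsHyperforest (insert e₁ (insert e₂ (E.erase e))) := by
  have hA := h.isAcyclic
  refine ⟨?_, isAcyclic_iff_not_hasSimpleCycle.1 fun g hg u hu v hv huv hr => huv ?_⟩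
  · simp only [mem_insert]
    rintro f (rfl | rfl | hf)
    exacts [hcard₁, hcard₂, h.1 f (mem_of_mem_erase hf)]
  simp only [mem_insert] at hg
  rcases hg with rfl | rfl | hg
  · exact hA.eq_of_reachable_insert_erase he he₁ he₂ hinter hu hv
      (hr.mono_of_subset (erase_insert_subset _ _))
  · refine hA.eq_of_reachable_insert_erase he he₂ he₁ (inter_comm e₁ g ▸ hinter) hu hv
      (hr.mono_of_subset fun f hf => ?_)
    simp only [mem_erase, mem_insert] at hf ⊢
    tauto
  · have hge : g ≠ e := ne_of_mem_erase hg
    refine absurd (hr.mono fun f hf => ?_) (hA g (mem_of_mem_erase hg) u hu v hv huv)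
    simp only [mem_erase, mem_insert] at hf
    rcases hf with ⟨hfg, rfl | rfl | ⟨-, hf⟩⟩
    · exact ⟨e, mem_erase.2 ⟨hge.symm, he⟩, he₁⟩
    · exact ⟨e, mem_erase.2 ⟨hge.symm, he⟩, he₂⟩
    · exact ⟨f, mem_erase.2 ⟨hfg, hf⟩, subset_rfl⟩

theorem IsHyperforest.weight_split (h : IsHyperforest E) (he : e ∈ E) (he₁ : e₁ ⊆ e)
    (he₂ : e₂ ⊆ e) (hcard₁ : 2 ≤ #e₁) (hcard₂ : 2 ≤ #e₂) (he₁₂ : e₁ ≠ e₂) :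
    weight (insert e₁ (insert e₂ (E.erase e))) + (2 * #e - 3) =
      2 * #e₁ - 3 + (2 * #e₂ - 3) + weight E := by
  have he₂E : e₂ ∉ E.erase e := fun h' =>
    h.isAcyclic.not_subset_of_mem_erase he h' hcard₂ he₂ subset_rfl
  have he₁E : e₁ ∉ insert e₂ (E.erase e) := by
    rw [mem_insert, not_or]
    exact ⟨he₁₂, fun h' => h.isAcyclic.not_subset_of_mem_erase he h' hcard₁ he₁ subset_rfl⟩
  rw [weight_insert he₁E, weight_insert he₂E, ← weight_erase_add he]
  ring

end Covers

section Descent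

variable {e : Finset V}

/- The order is written `hyperforestPreorder.lt`: plain `σ < τ` would elaborate with
`Subtype.instLT`, strict inclusion of the underlying finsets. -/

theorem exists_lt_weight_add_one_of_card_eq_two
    (τ : {E : Finset (Finset V) // IsHyperforest E}) (he : e ∈ τ.1) (hcard : #e = 2) :
    ∃ σ, hyperforestPreorder.lt σ τ ∧ weight σ.1 + 1 = weight τ.1 := by
  classical
  refine ⟨⟨τ.1.erase e, τ.2.mono (erase_subset e _)⟩,
    ⟨fun f hf => ⟨f, mem_of_mem_erase hf, subset_rfl⟩, fun hge => ?_⟩, ?_⟩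
  · obtain ⟨g, hg, heg⟩ := hge e he
    exact τ.2.isAcyclic.not_subset_of_mem_erase he hg hcard.ge subset_rfl heg
  · simpa [hcard] using weight_erase_add he

theorem exists_lt_weight_add_one_of_three_le_card
    (τ : {E : Finset (Finset V) // IsHyperforest E}) (he : e ∈ τ.1) (hcard : 3 ≤ #e) :
    ∃ σ, hyperforestPreorder.lt σ τ ∧ weight σ.1 + 1 = weight τ.1 := by
  classical
  obtain ⟨τ, hτ⟩ := τ
  simp only at he ⊢
  have hA := hτ.isAcyclic
  obtain ⟨x, hx⟩ : e.Nonempty := card_pos.1 (by omega)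
  obtain ⟨y, hy⟩ : (e.erase x).Nonempty :=
    card_pos.1 (by rw [card_erase_of_mem hx]; omega)
  have hxy : x ≠ y := (ne_of_mem_erase hy).symm
  set e₁ : Finset V := {x, y}
  set e₂ := e.erase x
  have he₁ : e₁ ⊆ e := insert_subset hx (singleton_subset_iff.2 (mem_of_mem_erase hy))
  have he₂ : e₂ ⊆ e := erase_subset x e
  have hcard₁ : #e₁ = 2 := card_pair hxy
  have hcard₂ : #e₂ = #e - 1 := card_erase_of_mem hx
  have hinter : #(e₁ ∩ e₂) ≤ 1 := card_le_one.2 fun a ha b hb => by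
    simp only [e₁, e₂, mem_inter, mem_insert, mem_singleton, mem_erase] at ha hb
    grind
  have he₁₂ : e₁ ≠ e₂ := fun h => notMem_erase x e (h ▸ mem_insert_self x {y} : x ∈ e₂)
  refine ⟨⟨_, hτ.split he he₁ he₂ hinter (by omega) (by omega)⟩, ⟨?_, fun hge => ?_⟩, ?_⟩
  · simp only [mem_insert]
    rintro f (rfl | rfl | hf)
    exacts [⟨e, he, he₁⟩, ⟨e, he, he₂⟩, ⟨f, mem_of_mem_erase hf, subset_rfl⟩]
  · obtain ⟨g, hg, heg⟩ := hge e he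
    simp only [mem_insert] at hg
    rcases hg with rfl | rfl | hg
    · have := card_le_card heg
      omega
    · exact notMem_erase x e (heg hx)
    · exact hA.not_subset_of_mem_erase he hg (by omega) subset_rfl heg
  · have := hτ.weight_split he he₁ he₂ (by omega) (by omega) he₁₂
    rw [hcard₁, hcard₂] at this
    dsimp only
    omega

theorem exists_lt_weight_add_one (τ : {E : Finset (Finset V) // IsHyperforest E})
    (hne : τ.1.Nonempty) : ∃ σ, hyperforestPreorder.lt σ τ ∧ weight σ.1 + 1 = weight τ.1 := by
  obtain ⟨e, he⟩ := hne
  rcases (τ.2.1 e he).eq_or_lt with h | h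
  exacts [exists_lt_weight_add_one_of_card_eq_two τ he h.symm,
    exists_lt_weight_add_one_of_three_le_card τ he h]

theorem exists_lt_weight_eq (τ : {E : Finset (Finset V) // IsHyperforest E}) :
    ∀ n < weight τ.1, ∃ σ, hyperforestPreorder.lt σ τ ∧ weight σ.1 = n := by
  intro n hn
  obtain ⟨k, hk⟩ := Nat.exists_eq_add_of_lt hn
  induction k generalizing τ with
  | zero =>
    obtain ⟨σ, hστ, hσ⟩ := exists_lt_weight_add_one τ
      (nonempty_of_weight_ne_zero (by omega))
    exact ⟨σ, hστ, by omega⟩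
  | succ k ih =>
    obtain ⟨ρ, hρτ, hρ⟩ := exists_lt_weight_add_one τ
      (nonempty_of_weight_ne_zero (by omega))
    obtain ⟨σ, hσρ, hσ⟩ := ih ρ (by omega) (by omega)
    exact ⟨σ, hσρ.trans hρτ, hσ⟩

end Descent

theorem height_eq_weight [Fintype V] (τ : {E : Finset (Finset V) // IsHyperforest E}) :
    Order.height τ = weight τ.1 := by
  rw [Order.height_eq_of_strictMono _ weight_strictMono exists_lt_weight_eq τ, Order.height_nat]

theorem IsHyperforest.weight_eq [Fintype V] {E : Finset (Finset V)} (h : IsHyperforest E) :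
    weight E = 2 * Fintype.card V - #E - 2 * Nat.card (Quot (Reachable E)) := by
  classical
  have := h.weight_add_card_add_two_mul_card_image_component fun e _ => subset_univ e
  rw [nat_card_quot_reachable, ← card_univ]
  omega

theorem nat_card_quot_reachable_of_connected [Nonempty V] {E : Finset (Finset V)}
    (h : Connected E) : Nat.card (Quot (Reachable E)) = 1 :=
  Nat.card_eq_one_iff_unique.2
    ⟨⟨fun a b => Quot.induction_on₂ a b fun u v => Quot.sound (h u v)⟩,
      ‹Nonempty V›.map (Quot.mk _)⟩

end

theorem stmt3_general {V : Type*} [Fintype V]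
    (τ : {E : Finset (Finset V) // IsHyperforest E}) :
    Order.height τ =
      ((2 * Fintype.card V - τ.1.card - 2 * Nat.card (Quot (Reachable τ.1)) : ℕ) : ℕ∞) ∧
    ∀ n k : ℕ, Connected τ.1 → Fintype.card V = n + 1 → τ.1.card = k →
      Order.height τ = ((2 * n - k : ℕ) : ℕ∞) := by
  have hheight : Order.height τ =
      ((2 * Fintype.card V - τ.1.card - 2 * Nat.card (Quot (Reachable τ.1)) : ℕ) : ℕ∞) := by
    rw [height_eq_weight, τ.2.weight_eq]
  refine ⟨hheight, fun n k hconn hcard hk => ?_⟩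
  have : Nonempty V := Fintype.card_pos_iff.1 (by omega)
  rw [hheight, nat_card_quot_reachable_of_connected hconn, hcard, hk]
  congr 1
  omega

/-- The height of a hyperforest τ in the hyperforest poset is 2|V| − |E| − 2|C|, where C is
the set of connected components; in particular a hypertree on n+1 vertices with k hyperedges
has height 2n − k. -/
theorem stmt3 {V : Type*} [Fintype V] [DecidableEq V]
    (τ : {E : Finset (Finset V) // IsHyperforest E}) :
    Order.height τ =
      ((2 * Fintype.card V - τ.1.card - 2 * Nat.card (Quot (Reachable τ.1)) : ℕ) : ℕ∞) ∧
    ∀ n k : ℕ, Connected τ.1 → Fintype.card V = n + 1 → τ.1.card = k →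
      Order.height τ = ((2 * n - k : ℕ) : ℕ∞) :=
  stmt3_general τ
end

section
/- For every noncrossing hypertree τ, the Hasse diagram of its hyperedge poset, viewed as an undirected graph on the hyperedges of τ, is a tree; its edges are exactly the pairs of hyperedges sharing a vertex that are adjacent in the local linear ordering at that vertex. -/
/-- The vertices of a convex polygon with `m` vertices, realized on the unit circle. -/
noncomputable def vtx (m : ℕ) (i : Fin m) : ℝ × ℝ :=
  (Real.cos (2 * Real.pi * (i : ℕ) / m), Real.sin (2 * Real.pi * (i : ℕ) / m))

/-- Two subsets of the vertices of a convex polygon are weakly noncrossing when their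
convex hulls have at most one point in common, and that point is a common vertex. -/
def WeaklyNoncrossing (m : ℕ) (A B : Finset (Fin m)) : Prop :=
  (convexHull ℝ (vtx m '' ↑A) ∩ convexHull ℝ (vtx m '' ↑B)).Subsingleton ∧
    convexHull ℝ (vtx m '' ↑A) ∩ convexHull ℝ (vtx m '' ↑B) ⊆ vtx m '' ↑(A ∩ B)

/-- A noncrossing hyperforest: a hyperforest whose hyperedges are pairwise weakly noncrossing. -/
def IsNCHyperforest (m : ℕ) (E : Finset (Finset (Fin m))) : Prop :=
  IsHyperforest E ∧ ∀ e ∈ E, ∀ f ∈ E, e ≠ f → WeaklyNoncrossing m e f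

/-- A noncrossing hypertree: a connected noncrossing hyperforest. -/
def IsNCHypertree (m : ℕ) (E : Finset (Finset (Fin m))) : Prop :=
  IsNCHyperforest m E ∧ Connected E
/-- The clockwise offset from `v` to `w` around the polygon. -/
def offsetFrom (m : ℕ) (v w : Fin m) : ℕ := (w.val + m - v.val) % m

/-- The local linear order at a vertex `v`: hyperedge `e` is to the left of hyperedge `f`
(both containing `v`) when the other vertices of `e` come earlier in clockwise order from `v`. -/
def LocalLt (m : ℕ) (v : Fin m) (e f : Finset (Fin m)) : Prop :=
  ((e.erase v).image (offsetFrom m v)).min < ((f.erase v).image (offsetFrom m v)).min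

/-- One hyperedge of `E` is below another at some shared vertex. -/
def EdgeRel (m : ℕ) (E : Finset (Finset (Fin m))) (e f : Finset (Fin m)) : Prop :=
  e ∈ E ∧ f ∈ E ∧ ∃ v, v ∈ e ∧ v ∈ f ∧ LocalLt m v e f

/-- The hyperedge poset order: the reflexive-transitive closure of the local linear orders. -/
def HLe (m : ℕ) (E : Finset (Finset (Fin m))) (e f : Finset (Fin m)) : Prop :=
  Relation.ReflTransGen (EdgeRel m E) e f

/-- Strict hyperedge poset order. -/
def HLt (m : ℕ) (E : Finset (Finset (Fin m))) (e f : Finset (Fin m)) : Prop :=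
  HLe m E e f ∧ e ≠ f

/-- Covering relation in the hyperedge poset. -/
def HCov (m : ℕ) (E : Finset (Finset (Fin m))) (e f : Finset (Fin m)) : Prop :=
  HLt m E e f ∧ ∀ g, ¬ (HLt m E e g ∧ HLt m E g f)

/-!
Since two hyperedges of a hyperforest share at most one vertex, the local orders are linear, and
every local comparison refines into a chain of local covers, so the hyperedge order is the
reflexive-transitive closure of the local covering relation. The graph of local covers is a tree.
It is connected because the hypertree is. A cycle in it either has a vertex `v` common to all its
hyperedges, and then its top element in the order at `v` has two distinct lower covers there, or
it yields a closed walk in the hypertree that shortens to a simple cycle. Chains of local covers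
never backtrack, as covers are asymmetric, so in this tree they are paths; uniqueness of paths
then identifies the covering pairs of the hyperedge order with the local covers.
-/

open SimpleGraph

section Hypergraph

variable {V : Type*} {E : Finset (Finset V)}

theorem isHyperPath_map_range' (v : ℕ → V) (g : ℕ → Finset V) (s n : ℕ)
    (hstep : ∀ k, s ≤ k → k < s + n → g k ∈ E ∧ v k ∈ g k ∧ v (k + 1) ∈ g k) :
    IsHyperPath E ((List.range' s (n + 1)).map v) ((List.range' s n).map g) := by
  induction n generalizing s with
  | zero => simp [IsHyperPath]
  | succ n ih =>
    obtain ⟨hgs, hvs, hvs'⟩ := hstep s le_rfl (by omega)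
    have hrest := ih (s + 1) fun k hk hk' => hstep k (by omega) (by omega)
    rw [List.range'_succ] at hrest ⊢
    rw [List.range'_succ]
    exact ⟨hgs, hvs, hvs', hrest⟩

structure IsClosedHyperwalk (E : Finset (Finset V)) (n : ℕ) (v : ℕ → V)
    (g : ℕ → Finset V) : Prop where
  step : ∀ k < n, g k ∈ E ∧ v k ∈ g k ∧ v (k + 1) ∈ g k
  closed : v n = v 0
  injOn : Set.InjOn g (Set.Iio n)

namespace IsClosedHyperwalk

variable {n : ℕ} {v : ℕ → V} {g : ℕ → Finset V}

theorem hasSimpleCycle_of_injOn (hw : IsClosedHyperwalk E n v g) (hn : 2 ≤ n)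
    (hv : Set.InjOn v (Set.Iio n)) : HasSimpleCycle E := by
  have hvs : (List.range (n + 1)).map v = (List.range n).map v ++ [v n] := by
    simp [List.range_succ]
  refine ⟨(List.range (n + 1)).map v, (List.range n).map g, ?_, by simpa, ?_, ?_, ?_⟩
  · simpa only [List.range_eq_range'] using
      isHyperPath_map_range' v g 0 n fun k _ hk => hw.step k (by omega)
  · exact List.nodup_range.map_on fun a ha b hb =>
      hw.injOn (by simpa using ha) (by simpa using hb)
  · rw [hvs, List.dropLast_concat]
    exact List.nodup_range.map_on fun a ha b hb => hv (by simpa using ha) (by simpa using hb)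
  · rw [hvs, List.getLast?_concat, hw.closed]
    obtain ⟨n', rfl⟩ : ∃ n', n = n' + 1 := ⟨n - 1, by omega⟩
    simp [List.range_succ_eq_map]

/-- Skipping the `k`-th hyperedge, which the walk enters and leaves at the same vertex. -/
theorem skip (hw : IsClosedHyperwalk E n v g) {k : ℕ} (hk : k < n) (hvk : v k = v (k + 1))
    (hmove : ∃ k < n, v k ≠ v (k + 1)) :
    let φ : ℕ → ℕ := fun i => if i < k then i else i + 1
    IsClosedHyperwalk E (n - 1) (v ∘ φ) (g ∘ φ) ∧
      ∃ i < n - 1, v (φ i) ≠ v (φ (i + 1)) := by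
  intro φ
  have hφ_succ : ∀ i, v (φ (i + 1)) = v (φ i + 1) := by
    intro i
    rcases lt_trichotomy (i + 1) k with h | h | h
    · simp only [φ, if_pos h, if_pos (show i < k by omega)]
    · simp only [φ]
      rw [if_neg (by omega), if_pos (by omega), h]
      exact hvk.symm
    · simp only [φ, if_neg (show ¬ i + 1 < k by omega), if_neg (show ¬ i < k by omega)]
  have hφ_lt : ∀ i < n - 1, φ i < n := fun i hi => by simp only [φ]; split_ifs <;> omega
  obtain ⟨k₀, hk₀, hvk₀⟩ := hmove
  have hk₀k : k₀ ≠ k := by rintro rfl; exact hvk₀ hvk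
  refine ⟨⟨fun i hi => ?_, ?_, ?_⟩,
    if k₀ < k then k₀ else k₀ - 1, by split_ifs <;> omega, ?_⟩
  · simpa only [Function.comp, hφ_succ] using hw.step _ (hφ_lt i hi)
  · have h0 : v (φ 0) = v 0 := by
      simp only [φ]; split_ifs with h
      · rfl
      · rw [show k = 0 by omega] at hvk; exact hvk.symm
    rw [Function.comp_apply, Function.comp_apply, h0, ← hw.closed]
    simp only [φ, if_neg (show ¬ n - 1 < k by omega), Nat.sub_add_cancel (show 1 ≤ n by omega)]
  · refine hw.injOn.comp (fun a _ b _ hab => ?_) fun i hi => hφ_lt i hi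
    simp only [φ] at hab; split_ifs at hab <;> omega
  · simp only [hφ_succ, φ]
    split_ifs <;>
      first | exact hvk₀ | (rw [show k₀ - 1 + 1 = k₀ by omega]; exact hvk₀) | omega

theorem shortcut (hw : IsClosedHyperwalk E n v g) {i j : ℕ} (hij : i < j) (hjn : j < n)
    (hvij : v i = v j) :
    IsClosedHyperwalk E (j - i) (fun k => v (i + k)) (fun k => g (i + k)) where
  step k hk := by simpa only [← Nat.add_assoc] using hw.step (i + k) (by omega)
  closed := by simp only [Nat.add_sub_cancel' hij.le, hvij, Nat.add_zero]
  injOn := hw.injOn.comp (fun a _ b _ hab => by omega) fun k hk => by simp at hk ⊢; omega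

theorem hasSimpleCycle (hw : IsClosedHyperwalk E n v g) (hmove : ∃ k < n, v k ≠ v (k + 1)) :
    HasSimpleCycle E := by
  induction n using Nat.strong_induction_on generalizing v g with
  | _ n ih =>
  by_cases hstay : ∃ k < n, v k = v (k + 1)
  · obtain ⟨k, hk, hvk⟩ := hstay
    obtain ⟨hw', hmove'⟩ := hw.skip hk hvk hmove
    exact ih (n - 1) (by omega) hw' hmove'
  push Not at hstay
  by_cases hrep : ∃ i j, i < j ∧ j < n ∧ v i = v j
  · obtain ⟨i, j, hij, hjn, hvij⟩ := hrep
    exact ih (j - i) (by omega) (hw.shortcut hij hjn hvij) ⟨0, by omega, hstay i (by omega)⟩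
  push Not at hrep
  obtain ⟨k₀, hk₀, hvk₀⟩ := hmove
  have hn : 2 ≤ n := by
    by_contra h
    obtain rfl : n = 1 := by omega
    obtain rfl : k₀ = 0 := by omega
    exact hvk₀ hw.closed.symm
  refine hw.hasSimpleCycle_of_injOn hn fun a ha b hb hab => ?_
  by_contra hne
  rcases lt_or_gt_of_ne hne with h | h
  · exact hrep a b h hb hab
  · exact hrep b a h ha hab.symm

end IsClosedHyperwalk

theorem IsHyperforest.eq_of_mem_of_mem
    (hF : IsHyperforest E) {e f : Finset V} {a b : V} (he : e ∈ E) (hf : f ∈ E) (hef : e ≠ f)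
    (hae : a ∈ e) (haf : a ∈ f) (hbe : b ∈ e) (hbf : b ∈ f) : a = b := by
  by_contra hab
  exact hF.2 ⟨[a, b, a], [e, f], ⟨he, hae, hbe, hf, hbf, haf, trivial⟩, by simp,
    by simp [hef], by simp [hab], by simp⟩

end Hypergraph

theorem SimpleGraph.IsAcyclic.isPath_of_forall_darts {W : Type*} {G : SimpleGraph W}
    (hG : G.IsAcyclic) {r : W → W → Prop} (hr : ∀ a b, r a b → ¬ r b a) {u w : W}
    (p : G.Walk u w) (hp : ∀ d ∈ p.darts, r d.fst d.snd) : p.IsPath := by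
  rw [hG.isPath_iff_isChain]
  induction p with
  | nil => simp
  | cons h q ih =>
    simp only [Walk.darts_cons, List.mem_cons, forall_eq_or_imp] at hp
    rw [Walk.edges_cons, List.isChain_cons]
    refine ⟨?_, ih hp.2⟩
    cases q with
    | nil => simp
    | cons h' q' =>
      simp only [Walk.darts_cons, List.mem_cons, forall_eq_or_imp] at hp
      simp only [Walk.edges_cons, List.head?_cons, Option.mem_def, Option.some.injEq,
        forall_eq', ne_eq, Sym2.eq_iff]
      rintro (⟨rfl, -⟩ | ⟨rfl, -⟩)
      · exact h.ne rfl
      · exact hr _ _ hp.1 hp.2.1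

section LocalOrder

variable {m : ℕ} {E : Finset (Finset (Fin m))}

theorem offsetFrom_injective (v : Fin m) : Function.Injective (offsetFrom m v) := by
  intro a b h
  have hv := v.2.le
  have key : a.val + (m - v.val) ≡ b.val + (m - v.val) [MOD m] := by
    unfold offsetFrom at h
    rwa [Nat.add_sub_assoc hv, Nat.add_sub_assoc hv] at h
  exact Fin.ext (Nat.ModEq.eq_of_lt_of_lt (Nat.ModEq.add_right_cancel' _ key) a.2 b.2)

/-- `LocalLt m v e f` unfolds to `localKey m v e < localKey m v f`. -/
def localKey (m : ℕ) (v : Fin m) (e : Finset (Fin m)) : WithTop ℕ :=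
  ((e.erase v).image (offsetFrom m v)).min

theorem IsHyperforest.localKey_ne (hF : IsHyperforest E) {e f : Finset (Fin m)} {v : Fin m}
    (he : e ∈ E) (hf : f ∈ E) (hef : e ≠ f) (hve : v ∈ e) (hvf : v ∈ f) :
    localKey m v e ≠ localKey m v f := by
  intro hkey
  have hne : ((e.erase v).image (offsetFrom m v)).Nonempty := by
    refine Finset.Nonempty.image ?_ _
    rw [← Finset.card_pos, Finset.card_erase_of_mem hve]
    have := hF.1 e he
    omega
  obtain ⟨a, ha⟩ : ∃ a : ℕ, localKey m v e = a := Finset.min_of_nonempty hne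
  obtain ⟨w, hwe, hw⟩ := Finset.mem_image.mp (Finset.mem_of_min ha)
  obtain ⟨w', hwf, hw'⟩ := Finset.mem_image.mp (Finset.mem_of_min (hkey ▸ ha))
  obtain rfl := offsetFrom_injective v (hw.trans hw'.symm)
  exact (Finset.mem_erase.mp hwe).1
    (hF.eq_of_mem_of_mem he hf hef (Finset.mem_erase.mp hwe).2 (Finset.mem_erase.mp hwf).2 hve hvf)

theorem IsHyperforest.localLt_or_localLt (hF : IsHyperforest E) {e f : Finset (Fin m)} {v : Fin m}
    (he : e ∈ E) (hf : f ∈ E) (hef : e ≠ f) (hve : v ∈ e) (hvf : v ∈ f) :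
    LocalLt m v e f ∨ LocalLt m v f e :=
  (hF.localKey_ne he hf hef hve hvf).lt_or_gt

def LocalCovBy (m : ℕ) (E : Finset (Finset (Fin m))) (e f : Finset (Fin m)) : Prop :=
  e ∈ E ∧ f ∈ E ∧ ∃ v : Fin m, v ∈ e ∧ v ∈ f ∧ LocalLt m v e f ∧
    ¬ ∃ g ∈ E, v ∈ g ∧ LocalLt m v e g ∧ LocalLt m v g f

theorem LocalLt.ne {v : Fin m} {e f : Finset (Fin m)} (h : LocalLt m v e f) : e ≠ f := by
  rintro rfl
  exact lt_irrefl _ h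

theorem LocalCovBy.ne {e f : Finset (Fin m)} (h : LocalCovBy m E e f) : e ≠ f :=
  let ⟨_, _, _, _, _, hlt, _⟩ := h
  hlt.ne

theorem IsHyperforest.localCovBy_at (hF : IsHyperforest E) {e f : Finset (Fin m)} {v : Fin m}
    (h : LocalCovBy m E e f) (hve : v ∈ e) (hvf : v ∈ f) :
    LocalLt m v e f ∧ ¬ ∃ g ∈ E, v ∈ g ∧ LocalLt m v e g ∧ LocalLt m v g f := by
  obtain ⟨he, hf, w, hwe, hwf, hcov⟩ := h
  obtain rfl := hF.eq_of_mem_of_mem he hf hcov.1.ne hwe hwf hve hvf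
  exact hcov

theorem IsHyperforest.eq_of_localCovBy_of_localCovBy (hF : IsHyperforest E)
    {a b c : Finset (Fin m)} {v : Fin m} (hva : v ∈ a) (hvb : v ∈ b) (hvc : v ∈ c)
    (hb : LocalCovBy m E b a) (hc : LocalCovBy m E c a) : b = c := by
  obtain ⟨hba, hb_cov⟩ := hF.localCovBy_at hb hvb hva
  obtain ⟨hca, hc_cov⟩ := hF.localCovBy_at hc hvc hva
  by_contra hbc
  rcases hF.localLt_or_localLt hb.1 hc.1 hbc hvb hvc with h | h
  · exact hb_cov ⟨c, hc.1, hvc, h, hca⟩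
  · exact hc_cov ⟨b, hb.1, hvb, h, hba⟩

theorem reflTransGen_localCovBy_of_localLt {e f : Finset (Fin m)} {v : Fin m} (he : e ∈ E)
    (hf : f ∈ E) (hve : v ∈ e) (hvf : v ∈ f)
    (hlt : LocalLt m v e f) : Relation.ReflTransGen (LocalCovBy m E) e f := by
  classical
  set between : Finset (Fin m) → Finset (Finset (Fin m)) :=
    fun e => E.filter fun g => v ∈ g ∧ LocalLt m v e g ∧ LocalLt m v g f
  induction hn : (between e).card using Nat.strong_induction_on generalizing e with
  | _ n ih =>
  by_cases hB : (between e).Nonempty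
  · obtain ⟨g, hg, hmin⟩ := Finset.exists_min_image _ (localKey m v) hB
    obtain ⟨hgE, hvg, heg, hgf⟩ := Finset.mem_filter.mp hg
    have hcov : LocalCovBy m E e g := by
      refine ⟨he, hgE, v, hve, hvg, heg, fun ⟨h, hhE, hvh, heh, hhg⟩ => ?_⟩
      exact (hmin h (Finset.mem_filter.mpr ⟨hhE, hvh, heh, hhg.trans hgf⟩)).not_gt hhg
    have hsub : between g ⊂ between e := by
      refine ⟨fun h hh => ?_, fun hsub => lt_irrefl _ (Finset.mem_filter.mp (hsub hg)).2.2.1⟩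
      obtain ⟨hhE, hvh, hgh, hhf⟩ := Finset.mem_filter.mp hh
      exact Finset.mem_filter.mpr ⟨hhE, hvh, heg.trans hgh, hhf⟩
    exact .head hcov (ih _ (hn ▸ Finset.card_lt_card hsub) hgE hvg hgf rfl)
  · refine .single ⟨he, hf, v, hve, hvf, hlt, fun ⟨g, hgE, hvg, heg, hgf⟩ => hB ?_⟩
    exact ⟨g, Finset.mem_filter.mpr ⟨hgE, hvg, heg, hgf⟩⟩

theorem hLe_iff_reflTransGen_localCovBy {e f : Finset (Fin m)} :
    HLe m E e f ↔ Relation.ReflTransGen (LocalCovBy m E) e f := by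
  refine ⟨fun h => ?_, fun h => h.lift id fun a b ⟨ha, hb, v, hva, hvb, hlt, _⟩ =>
    ⟨ha, hb, v, hva, hvb, hlt⟩⟩
  induction h with
  | refl => exact .refl
  | tail _ hbc ih =>
    obtain ⟨hb, hc, v, hvb, hvc, hlt⟩ := hbc
    exact ih.trans (reflTransGen_localCovBy_of_localLt hb hc hvb hvc hlt)

end LocalOrder

section LocalCovGraph

variable {m : ℕ} {E : Finset (Finset (Fin m))}

def localCovGraph (m : ℕ) (E : Finset (Finset (Fin m))) : SimpleGraph {e // e ∈ E} :=
  SimpleGraph.fromRel fun x y => LocalCovBy m E x.1 y.1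

theorem localCovGraph_adj {x y : {e // e ∈ E}} :
    (localCovGraph m E).Adj x y ↔ LocalCovBy m E x.1 y.1 ∨ LocalCovBy m E y.1 x.1 := by
  rw [localCovGraph, fromRel_adj, and_iff_right_iff_imp]
  rintro (h | h) rfl <;> exact h.ne rfl

theorem IsHyperforest.localCovBy_asymm (hF : IsHyperforest E) {e f : Finset (Fin m)}
    (hef : LocalCovBy m E e f) : ¬ LocalCovBy m E f e := by
  obtain ⟨-, -, v, hve, hvf, hlt, -⟩ := hef
  exact fun hfe => lt_asymm hlt (hF.localCovBy_at hfe hvf hve).1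

theorem exists_walk_localCovGraph_of_reflTransGen {e f : Finset (Fin m)}
    (h : Relation.ReflTransGen (LocalCovBy m E) e f) (he : e ∈ E) (hf : f ∈ E) :
    ∃ p : (localCovGraph m E).Walk ⟨e, he⟩ ⟨f, hf⟩,
      ∀ d ∈ p.darts, LocalCovBy m E d.fst.1 d.snd.1 := by
  induction h using Relation.ReflTransGen.head_induction_on with
  | refl => exact ⟨.nil, by simp⟩
  | head hcov _ ih =>
    obtain ⟨p, hp⟩ := ih hcov.2.1
    exact ⟨.cons (localCovGraph_adj.mpr (.inl hcov)) p, by simpa [hcov] using hp⟩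

theorem reflTransGen_of_forall_darts {x y : {e // e ∈ E}} (p : (localCovGraph m E).Walk x y)
    (hp : ∀ d ∈ p.darts, LocalCovBy m E d.fst.1 d.snd.1) :
    Relation.ReflTransGen (LocalCovBy m E) x.1 y.1 := by
  induction p with
  | nil => exact .refl
  | cons _ q ih =>
    simp only [Walk.darts_cons, List.mem_cons, forall_eq_or_imp] at hp
    exact .head hp.1 (ih hp.2)

theorem IsHyperforest.not_isCycle_of_forall_mem (hF : IsHyperforest E) {v : Fin m}
    {a : {e // e ∈ E}} {c : (localCovGraph m E).Walk a a} (hc : c.IsCycle)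
    (hv : ∀ x ∈ c.support, v ∈ x.1) : False := by
  classical
  obtain ⟨t, ht, hmax⟩ :=
    c.support.toFinset.exists_max_image (fun x => localKey m v x.1) ⟨a, by simp⟩
  rw [List.mem_toFinset] at ht
  set c' := c.rotate t ht
  have hmem : ∀ x ∈ c'.support, x ∈ c.support := fun x => (c.mem_support_rotate_iff t ht).mp
  have hc' : c'.IsCycle := hc.rotate ht
  -- the top of the cycle in the local order at `v` would have two lower covers at `v`
  have hbelow : ∀ x ∈ c'.support, (localCovGraph m E).Adj t x → LocalCovBy m E x.1 t.1 := by
    intro x hx hadj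
    refine (localCovGraph_adj.mp hadj).resolve_left fun h => ?_
    exact (hmax x (List.mem_toFinset.mpr (hmem x hx))).not_gt
      (hF.localCovBy_at h (hv t ht) (hv x (hmem x hx))).1
  have hsnd := c'.getVert_mem_support 1
  have hpen := c'.getVert_mem_support (c'.length - 1)
  refine hc'.snd_ne_penultimate (Subtype.ext ?_)
  exact hF.eq_of_localCovBy_of_localCovBy (hv t ht) (hv _ (hmem _ hsnd)) (hv _ (hmem _ hpen))
    (hbelow _ hsnd (c'.adj_snd hc'.not_nil)) (hbelow _ hpen (c'.adj_penultimate hc'.not_nil).symm)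

theorem IsHyperforest.hasSimpleCycle_of_isCycle (hF : IsHyperforest E) {a : {e // e ∈ E}}
    {c : (localCovGraph m E).Walk a a} (hc : c.IsCycle)
    (hv : ¬ ∃ v, ∀ x ∈ c.support, v ∈ x.1) : HasSimpleCycle E := by
  set n := c.length
  have hshared : ∀ k, ∃ u, u ∈ (c.getVert k).1 ∧ u ∈ (c.getVert (k + 1)).1 := by
    intro k
    by_cases hk : k < n
    · obtain ⟨-, -, u, hu, hu', -⟩ | ⟨-, -, u, hu, hu', -⟩ :=
        localCovGraph_adj.mp (c.adj_getVert_succ hk)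
      exacts [⟨u, hu, hu'⟩, ⟨u, hu', hu⟩]
    · rw [c.getVert_of_length_le (by omega), c.getVert_of_length_le (by omega)]
      obtain ⟨u, hu⟩ := Finset.card_pos.mp (show 0 < a.1.card by have := hF.1 _ a.2; omega)
      exact ⟨u, hu, hu⟩
  choose u hu using hshared
  have hn := hc.three_le_length
  -- the closed hyperwalk `u 0, c.getVert 1, u 1, c.getVert 2, …, u (n - 1), c.getVert n, u 0`
  refine IsClosedHyperwalk.hasSimpleCycle (n := n) (v := fun k => u (k % n))
    (g := fun k => (c.getVert (k + 1)).1) ⟨fun k hk => ?_, by simp [Nat.mod_self], ?_⟩ ?_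
  · refine ⟨(c.getVert (k + 1)).2, by simpa [Nat.mod_eq_of_lt hk] using (hu k).2, ?_⟩
    rcases (show k + 1 < n ∨ k + 1 = n by omega) with hk' | hk'
    · simpa [Nat.mod_eq_of_lt hk'] using (hu (k + 1)).1
    · rw [hk', Nat.mod_self, c.getVert_length]
      simpa using (hu 0).1
  · intro i hi j hj hij
    have := hc.getVert_injOn (show 1 ≤ i + 1 ∧ i + 1 ≤ n by simp at hi; omega)
      (show 1 ≤ j + 1 ∧ j + 1 ≤ n by simp at hj; omega) (Subtype.ext hij)
    omega
  · by_contra hconst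
    push Not at hconst
    have hu0 : ∀ k < n, u k = u 0 := by
      intro k hk
      induction k with
      | zero => rfl
      | succ k ih =>
        have := hconst k (by omega)
        rw [Nat.mod_eq_of_lt (by omega), Nat.mod_eq_of_lt hk] at this
        rw [← this, ih (by omega)]
    refine hv ⟨u 0, fun x hx => ?_⟩
    obtain ⟨j, rfl, hj⟩ := Walk.mem_support_iff_exists_getVert.mp hx
    rcases j with _ | j
    · exact (hu 0).1
    · simpa [hu0 j (by omega)] using (hu j).2

theorem IsHyperforest.localCovGraph_isAcyclic (hF : IsHyperforest E) :
    (localCovGraph m E).IsAcyclic := by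
  intro a c hc
  by_cases hcommon : ∃ v, ∀ x ∈ c.support, v ∈ x.1
  · obtain ⟨v, hv⟩ := hcommon
    exact (hF.not_isCycle_of_forall_mem hc hv).elim
  · exact hF.2 (hF.hasSimpleCycle_of_isCycle hc hcommon)

theorem IsHyperforest.hCov_iff (hF : IsHyperforest E) {e f : Finset (Fin m)} (he : e ∈ E)
    (hf : f ∈ E) : HCov m E e f ↔ LocalCovBy m E e f := by
  simp only [HCov, HLt, hLe_iff_reflTransGen_localCovBy]
  constructor
  · rintro ⟨⟨hle, hne⟩, hmin⟩
    obtain ⟨p, hp⟩ := exists_walk_localCovGraph_of_reflTransGen hle he hf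
    cases p with
    | nil => exact absurd rfl hne
    | @cons _ g _ _ q =>
      simp only [Walk.darts_cons, List.mem_cons, forall_eq_or_imp] at hp
      by_contra hcov
      have hgf : g.1 ≠ f := fun hgf => hcov (hgf ▸ hp.1)
      exact hmin g.1 ⟨⟨.single hp.1, hp.1.ne⟩, reflTransGen_of_forall_darts q hp.2, hgf⟩
  · intro hcov
    refine ⟨⟨.single hcov, hcov.ne⟩, fun g ⟨⟨heg, hneg⟩, hgf, hngf⟩ => ?_⟩
    have hg : g ∈ E := by
      obtain rfl | ⟨_, hcov', _⟩ := hgf.cases_head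
      exacts [hf, hcov'.1]
    obtain ⟨p, hp⟩ := exists_walk_localCovGraph_of_reflTransGen heg he hg
    obtain ⟨q, hq⟩ := exists_walk_localCovGraph_of_reflTransGen hgf hg hf
    -- a path through `g` and the edge from `e` to `f` would be two distinct paths in a forest
    have hpq : (p.append q).IsPath :=
      hF.localCovGraph_isAcyclic.isPath_of_forall_darts (r := fun x y => LocalCovBy m E x.1 y.1)
        (fun _ _ => hF.localCovBy_asymm) _
        fun d hd => (List.mem_append.mp (Walk.darts_append p q ▸ hd)).elim (hp d) (hq d)
    have hedge := (localCovGraph_adj.mpr (.inl hcov) :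
      (localCovGraph m E).Adj ⟨e, he⟩ ⟨f, hf⟩).isPath_toWalk
    have hlen := congrArg (·.1.length)
      ((hF.localCovGraph_isAcyclic.subsingleton_path _ _).elim ⟨_, hpq⟩ ⟨_, hedge⟩)
    have hp0 : p.length ≠ 0 := fun h => hneg (congrArg Subtype.val (Walk.eq_of_length_eq_zero h))
    have hq0 : q.length ≠ 0 := fun h => hngf (congrArg Subtype.val (Walk.eq_of_length_eq_zero h))
    simp only [Walk.length_append, Adj.length_toWalk] at hlen
    omega

theorem IsHyperforest.fromRel_hCov_eq (hF : IsHyperforest E) :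
    SimpleGraph.fromRel (fun x y : {e // e ∈ E} => HCov m E x.1 y.1) = localCovGraph m E := by
  ext x y
  simp only [localCovGraph, fromRel_adj, hF.hCov_iff x.2 y.2, hF.hCov_iff y.2 x.2]

theorem IsHyperforest.localCovGraph_reachable_of_mem (hF : IsHyperforest E)
    {x y : {e // e ∈ E}} {v : Fin m} (hx : v ∈ x.1) (hy : v ∈ y.1) :
    (localCovGraph m E).Reachable x y := by
  obtain rfl | hxy := eq_or_ne x y
  · rfl
  rcases hF.localLt_or_localLt x.2 y.2 (Subtype.coe_ne_coe.mpr hxy) hx hy with h | h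
  · obtain ⟨p, -⟩ := exists_walk_localCovGraph_of_reflTransGen
      (reflTransGen_localCovBy_of_localLt x.2 y.2 hx hy h) x.2 y.2
    exact p.reachable
  · obtain ⟨p, -⟩ := exists_walk_localCovGraph_of_reflTransGen
      (reflTransGen_localCovBy_of_localLt y.2 x.2 hy hx h) y.2 x.2
    exact p.reachable.symm

theorem IsHyperforest.localCovGraph_reachable_of_isHyperPath (hF : IsHyperforest E) :
    ∀ {es : List (Finset (Fin m))} {vs : List (Fin m)}, IsHyperPath E vs es →
      ∀ {u w : Fin m} {x y : {e // e ∈ E}}, vs.head? = some u → vs.getLast? = some w →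
        u ∈ x.1 → w ∈ y.1 → (localCovGraph m E).Reachable x y
  | [], [_], _, _, _, _, _, hu, hw, hux, hwy => by
    simp only [List.head?_cons, List.getLast?_singleton, Option.some.injEq] at hu hw
    subst hu hw
    exact hF.localCovGraph_reachable_of_mem hux hwy
  | e :: _, _ :: _ :: _, ⟨he, hue, hve, hrest⟩, _, _, _, _, hu, hw, hux, hwy => by
    simp only [List.head?_cons, Option.some.injEq] at hu
    subst hu
    exact (hF.localCovGraph_reachable_of_mem (y := ⟨e, he⟩) hux hue).trans
      (hF.localCovGraph_reachable_of_isHyperPath hrest rfl (by simpa using hw) hve hwy)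

theorem IsHypertree.localCovGraph_isTree (hT : IsHypertree E) (hne : E.Nonempty) :
    (localCovGraph m E).IsTree := by
  obtain ⟨hF, hconn⟩ := hT
  refine ⟨(connected_iff _).mpr ⟨fun x y => ?_, hne.to_subtype⟩, hF.localCovGraph_isAcyclic⟩
  obtain ⟨u, hu⟩ := Finset.card_pos.mp (show 0 < x.1.card by have := hF.1 _ x.2; omega)
  obtain ⟨w, hw⟩ := Finset.card_pos.mp (show 0 < y.1.card by have := hF.1 _ y.2; omega)
  obtain ⟨vs, es, hp, hu', hw'⟩ := hconn u w
  exact hF.localCovGraph_reachable_of_isHyperPath hp hu' hw' hu hw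

end LocalCovGraph

/-- For every noncrossing hypertree τ (with at least one hyperedge), the Hasse diagram of its
hyperedge poset, viewed as an undirected graph on the hyperedges, is a tree, and its edges are
exactly the pairs of hyperedges sharing a vertex that are adjacent in the local linear
ordering at that vertex. -/
theorem stmt5 (m : ℕ) (E : Finset (Finset (Fin m))) (h : IsNCHypertree m E)
    (hne : E.Nonempty) :
    (SimpleGraph.fromRel (fun x y : {e // e ∈ E} => HCov m E x.1 y.1)).IsTree ∧
    ∀ x y : {e // e ∈ E},
      (SimpleGraph.fromRel (fun x y : {e // e ∈ E} => HCov m E x.1 y.1)).Adj x y ↔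
      x.1 ≠ y.1 ∧ ∃ v : Fin m, v ∈ x.1 ∧ v ∈ y.1 ∧
        ((LocalLt m v x.1 y.1 ∧ ¬ ∃ g ∈ E, v ∈ g ∧ LocalLt m v x.1 g ∧ LocalLt m v g y.1) ∨
         (LocalLt m v y.1 x.1 ∧ ¬ ∃ g ∈ E, v ∈ g ∧ LocalLt m v y.1 g ∧ LocalLt m v g x.1)) := by
  obtain ⟨⟨hF, -⟩, hconn⟩ := h
  rw [hF.fromRel_hCov_eq]
  refine ⟨IsHypertree.localCovGraph_isTree ⟨hF, hconn⟩ hne, fun x y => ?_⟩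
  rw [localCovGraph_adj]
  constructor
  · rintro (⟨-, -, v, hvx, hvy, hcov⟩ | ⟨-, -, v, hvy, hvx, hcov⟩)
    exacts [⟨hcov.1.ne, v, hvx, hvy, .inl hcov⟩, ⟨hcov.1.ne.symm, v, hvx, hvy, .inr hcov⟩]
  · rintro ⟨-, v, hvx, hvy, hcov | hcov⟩
    exacts [.inl ⟨x.2, y.2, v, hvx, hvy, hcov⟩, .inr ⟨y.2, x.2, v, hvy, hvx, hcov⟩]
end

section
/- The partition determined by the connected components of a noncrossing hyperforest is a noncrossing partition. -/
/-!
Vertices `i, j, k` of the polygon are in counterclockwise order exactly when the triangle they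
span has positive signed area, so crossing questions become questions about the cyclic order
of `Fin m`. Suppose two components interleave: `a, c` lie in one, and `b, d` in the other lie on
different arcs cut out by `a` and `c`. A path from `b` to `d` then uses a hyperedge `f` with
vertices `y, y'` on either side of the chord `ac`; the chord `yy'` separates `c` from `a`, so a
path from `c` to `a` uses a hyperedge `e` with vertices `x, x'` on either side of `yy'`. The
segments `xx'` and `yy'` meet, so the distinct hyperedges `e` and `f` share a vertex, which
merges the two components. Vertex sets that do not interleave are separated by the line through
two cyclically consecutive vertices of one of them.
-/

open Real Relation

theorem Relation.ReflTransGen.exists_step_leaving {α : Type*} {r : α → α → Prop} {p : α → Prop}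
    {a b : α} (h : ReflTransGen r a b) (ha : p a) (hb : ¬p b) :
    ∃ x y, ReflTransGen r a x ∧ r x y ∧ p x ∧ ¬p y := by
  induction h with
  | refl => exact absurd ha hb
  | @tail c d hac hcd ih =>
    by_cases hc : p c
    · exact ⟨c, d, hac, hcd, hc, hb⟩
    · exact ih hc

section CircularOrder

variable {α : Type*} [CircularOrder α] {a b c d : α}

theorem sbtw_or_sbtw_of_ne (hab : a ≠ b) (hbc : b ≠ c) (hca : c ≠ a) :
    sbtw a b c ∨ sbtw a c b := by
  by_contra! h
  rw [sbtw_iff_not_btw, sbtw_iff_not_btw, not_not, not_not] at h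
  rcases h.2.antisymm h.1.cyclic_left.cyclic_left with h | h | h
  exacts [hbc h, hca h, hab h]

theorem not_sbtw_of_sbtw (h : sbtw a b c) : ¬sbtw a c b :=
  fun h' => sbtw_asymm h h'.cyclic_left

/-- A chord `ac` separating `b` from `d` means the chord `bd` separates `c` from `a`. -/
theorem SBtw.sbtw.swap_chord (habc : sbtw a b c) (hacd : sbtw a c d) :
    sbtw b c d ∧ sbtw b d a :=
  ⟨(sbtw_trans_right hacd.cyclic_left habc.cyclic_right).cyclic_right,
    (sbtw_trans_right habc hacd).cyclic_left⟩

end CircularOrder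

theorem Fin.exists_sbtw_forall_not_sbtw {m : ℕ} {s : Set (Fin m)} (hs : s.Nontrivial)
    {b : Fin m} (hb : b ∉ s) : ∃ a ∈ s, ∃ c ∈ s, sbtw a b c ∧ ∀ x ∈ s, ¬sbtw a x c := by
  -- position of `x` on the circle when it is traversed starting from `b`
  let pos : Fin m → ℕ := fun x => if x < b then x + m else x
  obtain ⟨a, ha, ha_max⟩ := s.exists_max_image pos s.toFinite hs.nonempty
  obtain ⟨c, hc, hc_min⟩ := s.exists_min_image pos s.toFinite hs.nonempty
  obtain ⟨x, hx, y, hy, hxy⟩ := hs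
  have hne : ∀ z ∈ s, z.val ≠ b.val := fun z hz h => hb (Fin.ext h ▸ hz)
  have := ha_max x hx; have := ha_max y hy; have := hc_min x hx; have := hc_min y hy
  have := hne a ha; have := hne c hc; have := hne x hx; have := hne y hy
  have := Fin.val_ne_of_ne hxy
  refine ⟨a, ha, c, hc, ?_, fun z hz h => ?_⟩
  · simp only [pos, Fin.sbtw_iff, Fin.lt_def] at *
    split_ifs at * <;> omega
  · have := ha_max z hz; have := hc_min z hz; have := hne z hz
    simp only [pos, Fin.sbtw_iff, Fin.lt_def] at *
    split_ifs at * <;> omega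

/-- Twice the oriented area of the triangle `PQR`. -/
def signedArea (P Q R : ℝ × ℝ) : ℝ :=
  (Q.1 - P.1) * (R.2 - P.2) - (Q.2 - P.2) * (R.1 - P.1)

theorem signedArea_rotate (P Q R : ℝ × ℝ) : signedArea Q R P = signedArea P Q R := by
  unfold signedArea; ring

theorem signedArea_swap (P Q R : ℝ × ℝ) : signedArea P R Q = -signedArea P Q R := by
  unfold signedArea; ring

theorem signedArea_combo (P Q x y : ℝ × ℝ) {a b : ℝ} (hab : a + b = 1) :
    signedArea P Q (a • x + b • y) = a * signedArea P Q x + b * signedArea P Q y := by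
  obtain rfl : b = 1 - a := by linarith
  simp only [signedArea, Prod.fst_add, Prod.snd_add, Prod.smul_fst, Prod.smul_snd, smul_eq_mul]
  ring

theorem convex_signedArea_preimage (P Q : ℝ × ℝ) {s : Set ℝ} (hs : Convex ℝ s) :
    Convex ℝ (signedArea P Q ⁻¹' s) := by
  intro x hx y hy a b ha hb hab
  rw [Set.mem_preimage, signedArea_combo P Q x y hab]
  exact hs hx hy ha hb hab

theorem disjoint_convexHull_of_signedArea {P Q : ℝ × ℝ} {S T : Set (ℝ × ℝ)}
    (hS : ∀ z ∈ S, 0 ≤ signedArea P Q z) (hT : ∀ z ∈ T, signedArea P Q z < 0) :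
    Disjoint (convexHull ℝ S) (convexHull ℝ T) :=
  ((Set.Iio_disjoint_Ici le_rfl).preimage (signedArea P Q)).symm.mono
    (convexHull_min hS (convex_signedArea_preimage P Q (convex_Ici 0)))
    (convexHull_min hT (convex_signedArea_preimage P Q (convex_Iio 0)))

theorem segment_inter_nonempty_of_signedArea {x x' y y' : ℝ × ℝ}
    (hx : signedArea y y' x < 0) (hx' : 0 < signedArea y y' x')
    (hy : 0 < signedArea x x' y) (hy' : signedArea x x' y' < 0) :
    (segment ℝ x x' ∩ segment ℝ y y').Nonempty := by
  -- the intersection point of the two lines, as a convex combination of either pair of endpoints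
  have hD : signedArea y y' x' - signedArea y y' x = signedArea x x' y - signedArea x x' y' := by
    unfold signedArea; ring
  have hpos : 0 < signedArea x x' y - signedArea x x' y' := by linarith
  refine ⟨_, ⟨signedArea y y' x' / (signedArea x x' y - signedArea x x' y'),
    -signedArea y y' x / (signedArea x x' y - signedArea x x' y'),
    by positivity, div_nonneg (by linarith) hpos.le, ?_, rfl⟩,
    -signedArea x x' y' / (signedArea x x' y - signedArea x x' y'),
    signedArea x x' y / (signedArea x x' y - signedArea x x' y'),
    div_nonneg (by linarith) hpos.le, by positivity, ?_, ?_⟩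
  · field_simp; linarith
  · field_simp; ring
  · ext <;> simp only [Prod.smul_fst, Prod.smul_snd, Prod.fst_add, Prod.snd_add, smul_eq_mul] <;>
      field_simp <;> unfold signedArea <;> ring

theorem sin_two_mul_add_sin_two_mul_sub (x y : ℝ) :
    sin (2 * x) + sin (2 * y) - sin (2 * x + 2 * y) = 4 * sin x * sin y * sin (x + y) := by
  simp only [sin_two_mul, cos_two_mul, sin_add]
  linear_combination (-4 * sin x * cos x) * sin_sq_add_cos_sq y
    - 4 * sin y * cos y * sin_sq_add_cos_sq x

theorem signedArea_cos_sin (α β γ : ℝ) :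
    signedArea (cos α, sin α) (cos β, sin β) (cos γ, sin γ) =
      4 * sin ((β - α) / 2) * sin ((γ - β) / 2) * sin ((γ - α) / 2) := by
  have h := sin_two_mul_add_sin_two_mul_sub ((β - α) / 2) ((γ - β) / 2)
  rw [show 2 * ((β - α) / 2) = β - α by ring, show 2 * ((γ - β) / 2) = γ - β by ring,
    show (β - α) / 2 + (γ - β) / 2 = (γ - α) / 2 by ring, show β - α + (γ - β) = γ - α by ring] at h
  rw [← h]
  simp only [signedArea, sin_sub]
  ring

section Polygon

variable {m : ℕ}

noncomputable def polygonAngle (m : ℕ) (i : Fin m) : ℝ := 2 * π * i / m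

theorem vtx_eq_cos_sin (m : ℕ) (i : Fin m) :
    vtx m i = (cos (polygonAngle m i), sin (polygonAngle m i)) := rfl

theorem polygonAngle_sub_mem_Ioo {i j : Fin m} (h : i < j) :
    polygonAngle m j - polygonAngle m i ∈ Set.Ioo 0 (2 * π) := by
  have hm : (0 : ℝ) < m := by exact_mod_cast i.pos
  have hij : (i : ℝ) < j := by exact_mod_cast h
  have hjm : (j : ℝ) < m := by exact_mod_cast j.isLt
  have hi : (0 : ℝ) ≤ i := by positivity
  rw [polygonAngle, polygonAngle, ← sub_div, ← mul_sub, Set.mem_Ioo, div_lt_iff₀ hm]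
  constructor
  · have := pi_pos; positivity
  · nlinarith [pi_pos]

theorem signedArea_vtx_pos_of_lt {i j k : Fin m} (hij : i < j) (hjk : j < k) :
    0 < signedArea (vtx m i) (vtx m j) (vtx m k) := by
  have half_pos : ∀ {a b : Fin m}, a < b →
      0 < sin ((polygonAngle m b - polygonAngle m a) / 2) := fun h => by
    obtain ⟨h0, h2π⟩ := polygonAngle_sub_mem_Ioo h
    exact sin_pos_of_pos_of_lt_pi (by linarith) (by linarith)
  rw [vtx_eq_cos_sin, vtx_eq_cos_sin, vtx_eq_cos_sin, signedArea_cos_sin]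
  have := half_pos hij
  have := half_pos hjk
  have := half_pos (hij.trans hjk)
  positivity

theorem signedArea_vtx_pos {i j k : Fin m} (h : sbtw i j k) :
    0 < signedArea (vtx m i) (vtx m j) (vtx m k) := by
  rcases Fin.sbtw_iff.1 h with ⟨hij, hjk⟩ | ⟨hjk, hki⟩ | ⟨hki, hij⟩
  · exact signedArea_vtx_pos_of_lt hij hjk
  · rw [← signedArea_rotate]; exact signedArea_vtx_pos_of_lt hjk hki
  · rw [signedArea_rotate]; exact signedArea_vtx_pos_of_lt hki hij

theorem vtx_injective (m : ℕ) : Function.Injective (vtx m) := by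
  suffices ∀ {i j : Fin m}, i < j → vtx m i ≠ vtx m j from fun i j hij =>
    by_contra fun hne => (lt_or_gt_of_ne hne).elim (this · hij) (this · hij.symm)
  intro i j h hij
  obtain ⟨h0, h2π⟩ := polygonAngle_sub_mem_Ioo h
  have hcos : cos (polygonAngle m j - polygonAngle m i) = 1 := by
    simp only [vtx_eq_cos_sin, Prod.mk.injEq] at hij
    rw [cos_sub, ← hij.1, ← hij.2, ← sq, ← sq, cos_sq_add_sin_sq]
  rw [cos_eq_one_iff_of_lt_of_lt (by linarith) h2π] at hcos
  linarith

theorem signedArea_vtx_neg {i j k : Fin m} (h : sbtw i j k) :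
    signedArea (vtx m i) (vtx m k) (vtx m j) < 0 := by
  rw [signedArea_swap, neg_neg_iff_pos]
  exact signedArea_vtx_pos h

theorem segment_vtx_inter_nonempty {x x' y y' : Fin m} (hx : sbtw y x y')
    (hx' : sbtw y y' x') :
    (segment ℝ (vtx m x) (vtx m x') ∩ segment ℝ (vtx m y) (vtx m y')).Nonempty :=
  have hy := hx.swap_chord hx'
  segment_inter_nonempty_of_signedArea (signedArea_vtx_neg hx) (signedArea_vtx_pos hx')
    (signedArea_vtx_pos hy.2) (signedArea_vtx_neg hy.1)

theorem disjoint_convexHull_vtx_of_nontrivial {s t : Set (Fin m)} (hs : s.Nontrivial)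
    (ht : t.Nonempty) (hst : Disjoint s t)
    (hcross : ∀ a ∈ s, ∀ c ∈ s, ∀ b ∈ t, ∀ d ∈ t, ¬(sbtw a b c ∧ sbtw a c d)) :
    Disjoint (convexHull ℝ (vtx m '' s)) (convexHull ℝ (vtx m '' t)) := by
  obtain ⟨b₀, hb₀⟩ := ht
  obtain ⟨a, ha, c, hc, hb₀ac, hgap⟩ :=
    Fin.exists_sbtw_forall_not_sbtw hs (Set.disjoint_right.1 hst hb₀)
  have hac : a ≠ c := fun h => sbtw_irrefl_left_right (h ▸ hb₀ac)
  refine disjoint_convexHull_of_signedArea (P := vtx m a) (Q := vtx m c) ?_ ?_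
  · rintro _ ⟨x, hx, rfl⟩
    by_cases hxa : x = a
    · simp [hxa, signedArea]
    by_cases hxc : x = c
    · simp [hxc, signedArea, mul_comm]
    exact (signedArea_vtx_pos (((sbtw_or_sbtw_of_ne (Ne.symm hxa) hxc hac.symm).resolve_left
      (hgap x hx)))).le
  · rintro _ ⟨b, hb, rfl⟩
    have hba : b ≠ a := fun h => Set.disjoint_right.1 hst hb (h ▸ ha)
    have hbc : b ≠ c := fun h => Set.disjoint_right.1 hst hb (h ▸ hc)
    exact signedArea_vtx_neg ((sbtw_or_sbtw_of_ne hba.symm hbc hac.symm).resolve_right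
      fun h => hcross a ha c hc b₀ hb₀ b hb ⟨hb₀ac, h⟩)

theorem disjoint_convexHull_vtx {s t : Set (Fin m)} (hs : s.Nonempty) (ht : t.Nonempty)
    (hst : Disjoint s t)
    (hcross : ∀ a ∈ s, ∀ c ∈ s, ∀ b ∈ t, ∀ d ∈ t, ¬(sbtw a b c ∧ sbtw a c d)) :
    Disjoint (convexHull ℝ (vtx m '' s)) (convexHull ℝ (vtx m '' t)) := by
  have hcross' : ∀ b ∈ t, ∀ d ∈ t, ∀ a ∈ s, ∀ c ∈ s, ¬(sbtw b a d ∧ sbtw b d c) :=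
    fun b hb d hd a ha c hc h => hcross a ha c hc d hd b hb (h.1.swap_chord h.2)
  rcases s.subsingleton_or_nontrivial with hs' | hs'
  · rcases t.subsingleton_or_nontrivial with ht' | ht'
    · obtain ⟨a, ha⟩ := hs
      obtain ⟨b, hb⟩ := ht
      rw [hs'.eq_singleton_of_mem ha, ht'.eq_singleton_of_mem hb, Set.image_singleton,
        Set.image_singleton, convexHull_singleton, convexHull_singleton,
        Set.disjoint_singleton]
      exact (vtx_injective m).ne fun hab => Set.disjoint_left.1 hst ha (hab ▸ hb)
    · exact (disjoint_convexHull_vtx_of_nontrivial ht' hs hst.symm hcross').symm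
  · exact disjoint_convexHull_vtx_of_nontrivial hs' ht hst hcross

end Polygon

def HyperAdj {V : Type*} (E : Finset (Finset V)) (x y : V) : Prop := ∃ e ∈ E, x ∈ e ∧ y ∈ e

instance {V : Type*} (E : Finset (Finset V)) : Std.Symm (HyperAdj E) :=
  ⟨fun _ _ ⟨e, he, hx, hy⟩ => ⟨e, he, hy, hx⟩⟩

section Hypergraph

variable {V : Type*} {E : Finset (Finset V)}

theorem IsHyperPath.reflTransGen_s7 : ∀ {vs : List V} {es : List (Finset V)} {u v : V},
    IsHyperPath E vs es → vs.head? = some u → vs.getLast? = some v →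
      ReflTransGen (HyperAdj E) u v
  | [_], [], _, _, _, hu, hv => by cases hu; cases hv; exact .refl
  | x :: y :: vs, e :: es, u, v, ⟨he, hx, hy, hp⟩, hu, hv => by
    obtain rfl : x = u := by simpa using hu
    exact .head ⟨e, he, hx, hy⟩ (hp.reflTransGen_s7 rfl (by simpa using hv))
  | [], _, _, _, h, _, _ | [_], _ :: _, _, _, h, _, _ | _ :: _ :: _, [], _, _, h, _, _ => h.elim

theorem Reachable.head {u v w : V} (huv : HyperAdj E u v) (hvw : Reachable E v w) :
    Reachable E u w := by
  obtain ⟨e, he, hu, hv⟩ := huv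
  obtain ⟨vs, es, hp, hh, hl⟩ := hvw
  obtain ⟨vs, rfl⟩ := List.head?_eq_some_iff.1 hh
  exact ⟨u :: v :: vs, e :: es, ⟨he, hu, hv, hp⟩, rfl, by rwa [List.getLast?_cons_cons]⟩

theorem reachable_iff_reflTransGen {u v : V} :
    Reachable E u v ↔ ReflTransGen (HyperAdj E) u v := by
  refine ⟨fun ⟨_, _, hp, hu, hv⟩ => hp.reflTransGen_s7 hu hv, fun h => ?_⟩
  induction h using ReflTransGen.head_induction_on with
  | refl => exact ⟨[v], [], trivial, rfl, rfl⟩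
  | head huv _ ih => exact ih.head huv

end Hypergraph

section Components

variable {m : ℕ} {E : Finset (Finset (Fin m))}

theorem exists_edge_crossing_chord {a b c d : Fin m} (hbd : ReflTransGen (HyperAdj E) b d)
    (havoid : ∀ z, ReflTransGen (HyperAdj E) b z → z ≠ a ∧ z ≠ c)
    (hb : sbtw a b c) (hd : sbtw a c d) :
    ∃ f ∈ E, ∃ y ∈ f, ∃ y' ∈ f,
      ReflTransGen (HyperAdj E) b y ∧ sbtw a y c ∧ sbtw a c y' := by
  obtain ⟨y, y', hby, ⟨f, hf, hy, hy'⟩, hyac, hy'ac⟩ :=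
    hbd.exists_step_leaving (p := fun z => sbtw a z c) hb (not_sbtw_of_sbtw hd)
  obtain ⟨hy'a, hy'c⟩ := havoid y' (hby.tail ⟨f, hf, hy, hy'⟩)
  have hac : a ≠ c := fun h => sbtw_irrefl_left_right (h ▸ hb)
  exact ⟨f, hf, y, hy, y', hy', hby, hyac,
    (sbtw_or_sbtw_of_ne hy'a.symm hy'c hac.symm).resolve_left hy'ac⟩

theorem not_sbtw_and_sbtw_of_not_reflTransGen
    (hNC : ∀ e ∈ E, ∀ f ∈ E, e ≠ f → WeaklyNoncrossing m e f) {u w a b c d : Fin m}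
    (huw : ¬ReflTransGen (HyperAdj E) u w)
    (ha : ReflTransGen (HyperAdj E) u a) (hc : ReflTransGen (HyperAdj E) u c)
    (hb : ReflTransGen (HyperAdj E) w b) (hd : ReflTransGen (HyperAdj E) w d) :
    ¬(sbtw a b c ∧ sbtw a c d) := by
  rintro ⟨hbac, hdac⟩
  have hsep : ∀ x, ReflTransGen (HyperAdj E) u x → ¬ReflTransGen (HyperAdj E) w x :=
    fun x hux hwx => huw (hux.trans (symm hwx))
  obtain ⟨f, hf, y, hyf, y', hy'f, hby, hyac, hy'ac⟩ := exists_edge_crossing_chord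
    ((symm hb).trans hd)
    (fun z hbz => ⟨fun h => hsep z (h ▸ ha) (hb.trans hbz),
      fun h => hsep z (h ▸ hc) (hb.trans hbz)⟩)
    hbac hdac
  have hwy : ReflTransGen (HyperAdj E) w y := hb.trans hby
  have hwy' : ReflTransGen (HyperAdj E) w y' := hwy.tail ⟨f, hf, hyf, hy'f⟩
  obtain ⟨hcyy', hayy'⟩ := hyac.swap_chord hy'ac
  obtain ⟨e, he, x, hxe, x', hx'e, hcx, hxyy', hx'yy'⟩ := exists_edge_crossing_chord
    ((symm hc).trans ha)
    (fun z hcz => ⟨fun h => hsep z (hc.trans hcz) (h ▸ hwy),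
      fun h => hsep z (hc.trans hcz) (h ▸ hwy')⟩)
    hcyy' hayy'
  have hux : ReflTransGen (HyperAdj E) u x := hc.trans hcx
  have hef : e ≠ f := fun h => hsep x hux (hwy.tail ⟨f, hf, hyf, h ▸ hxe⟩)
  obtain ⟨q, hqx, hqy⟩ := segment_vtx_inter_nonempty hxyy' hx'yy'
  obtain ⟨z, hz, -⟩ := (hNC e he f hf hef).2
    ⟨segment_subset_convexHull (Set.mem_image_of_mem _ hxe) (Set.mem_image_of_mem _ hx'e) hqx,
      segment_subset_convexHull (Set.mem_image_of_mem _ hyf) (Set.mem_image_of_mem _ hy'f) hqy⟩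
  rw [Finset.coe_inter] at hz
  exact hsep z (hux.tail ⟨e, he, hxe, hz.1⟩) (hwy.tail ⟨f, hf, hyf, hz.2⟩)

end Components

/-- The partition determined by the connected components of a noncrossing hyperforest is a
noncrossing partition: the convex hulls of distinct blocks are disjoint. -/
theorem stmt7 (m : ℕ) (E : Finset (Finset (Fin m))) (h : IsNCHyperforest m E)
    (u w : Fin m) (hnr : ¬ Reachable E u w) :
    Disjoint (convexHull ℝ (vtx m '' {x | Reachable E u x}))
             (convexHull ℝ (vtx m '' {x | Reachable E w x})) := by
  simp only [reachable_iff_reflTransGen] at hnr ⊢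
  refine disjoint_convexHull_vtx ⟨u, .refl⟩ ⟨w, .refl⟩ ?_
    fun a ha c hc b hb d hd => not_sbtw_and_sbtw_of_not_reflTransGen h.2 hnr ha hc hb hd
  exact Set.disjoint_left.2 fun x hux hwx => hnr (hux.trans (symm hwx))
end

section
/- In any reduced factorization σ₁σ₂⋯σ_k of a noncrossing permutation σ in Sym_{n+1}, each factor σᵢ is itself a noncrossing permutation. -/
/-- The irreducible permutation of a hyperedge: the cycle through its elements in increasing order. -/
def edgePerm {m : ℕ} (e : Finset (Fin m)) : Equiv.Perm (Fin m) :=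
  (e.sort (· ≤ ·)).formPerm

/-- The reflection (absolute) length of a permutation: the minimal number of
transpositions whose product is the permutation. -/
noncomputable def reflLen {α : Type*} [DecidableEq α] (σ : Equiv.Perm α) : ℕ :=
  sInf {k | ∃ l : List (Equiv.Perm α), l.prod = σ ∧ l.length = k ∧ ∀ t ∈ l, t.IsSwap}

section aux

open Equiv LinearMap Module

variable {m : ℕ}

/-- Linear-algebra witness: id minus the permutation action on functions. -/
noncomputable def Lmap (σ : Equiv.Perm (Fin m)) : (Fin m → ℚ) →ₗ[ℚ] (Fin m → ℚ) :=
  LinearMap.id - LinearMap.funLeft ℚ ℚ σ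

noncomputable def rk (σ : Equiv.Perm (Fin m)) : ℕ :=
  Module.finrank ℚ (LinearMap.range (Lmap σ))

lemma Lmap_apply (σ : Equiv.Perm (Fin m)) (f : Fin m → ℚ) (x : Fin m) :
    Lmap σ f x = f x - f (σ x) := by
  simp [Lmap, LinearMap.funLeft]

lemma rk_mul_le (σ τ : Equiv.Perm (Fin m)) : rk (σ * τ) ≤ rk σ + rk τ := by
  have hle : LinearMap.range (Lmap (σ * τ)) ≤
      LinearMap.range (Lmap σ) ⊔ LinearMap.range (Lmap τ) := by
    rintro v ⟨f, rfl⟩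
    have : Lmap (σ * τ) f = Lmap σ f + Lmap τ (f ∘ σ) := by
      funext x
      simp only [Lmap_apply, Pi.add_apply, Function.comp_apply, Equiv.Perm.mul_apply]
      ring
    rw [this]
    exact Submodule.add_mem _ (Submodule.mem_sup_left ⟨f, rfl⟩)
      (Submodule.mem_sup_right ⟨f ∘ σ, rfl⟩)
  calc rk (σ * τ) ≤ Module.finrank ℚ ↥(LinearMap.range (Lmap σ) ⊔ LinearMap.range (Lmap τ)) :=
        Submodule.finrank_mono hle
    _ ≤ rk σ + rk τ := Submodule.finrank_add_le_finrank_add_finrank _ _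

lemma rk_swap_le_one {t : Equiv.Perm (Fin m)} (ht : t.IsSwap) : rk t ≤ 1 := by
  obtain ⟨a, b, hab, rfl⟩ := ht
  set v : Fin m → ℚ := fun x => if x = a then 1 else if x = b then -1 else 0 with hv
  have hle : LinearMap.range (Lmap (Equiv.swap a b)) ≤ Submodule.span ℚ {v} := by
    rintro w ⟨f, rfl⟩
    apply Submodule.mem_span_singleton.2
    refine ⟨f a - f b, ?_⟩
    funext x
    simp only [Pi.smul_apply, smul_eq_mul, Lmap_apply, hv]
    by_cases hxa : x = a
    · subst hxa; simp [Equiv.swap_apply_left]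
    · by_cases hxb : x = b
      · subst hxb; simp [Equiv.swap_apply_right, hxa]
      · simp [Equiv.swap_apply_of_ne_of_ne hxa hxb, hxa, hxb]
  calc rk (Equiv.swap a b) ≤ Module.finrank ℚ ↥(Submodule.span ℚ ({v} : Set (Fin m → ℚ))) :=
        Submodule.finrank_mono hle
    _ ≤ 1 := by
        have hvne : v ≠ 0 := fun h => by
          have := congrFun h a
          simp [hv] at this
        exact le_of_eq (finrank_span_singleton hvne)

lemma rk_list_le (l : List (Equiv.Perm (Fin m))) (hl : ∀ t ∈ l, t.IsSwap) :
    rk l.prod ≤ l.length := by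
  induction l with
  | nil =>
    simp only [List.prod_nil, List.length_nil]
    have : Lmap (1 : Equiv.Perm (Fin m)) = 0 := by
      ext f x; simp [Lmap_apply]
    simp [rk, this]
  | cons a l ih =>
    have h1 : rk (a * l.prod) ≤ rk a + rk l.prod := rk_mul_le _ _
    have h2 : rk a ≤ 1 := rk_swap_le_one (hl a (by simp))
    have h3 : rk l.prod ≤ l.length := ih fun t ht => hl t (by simp [ht])
    simpa [Nat.add_comm] using h1.trans (Nat.add_le_add h2 h3)

lemma reflLen_set_nonempty (σ : Equiv.Perm (Fin m)) :
    {k | ∃ l : List (Equiv.Perm (Fin m)), l.prod = σ ∧ l.length = k ∧ ∀ t ∈ l, t.IsSwap}.Nonempty := by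
  obtain ⟨l, hl1, hl2⟩ := (Equiv.Perm.truncSwapFactors σ).out
  exact ⟨l.length, l, hl1, rfl, hl2⟩

lemma reflLen_spec (σ : Equiv.Perm (Fin m)) :
    ∃ l : List (Equiv.Perm (Fin m)),
      l.prod = σ ∧ l.length = reflLen σ ∧ ∀ t ∈ l, t.IsSwap :=
  Nat.sInf_mem (reflLen_set_nonempty σ)

lemma reflLen_le (σ : Equiv.Perm (Fin m)) (l : List (Equiv.Perm (Fin m)))
    (h1 : l.prod = σ) (h2 : ∀ t ∈ l, t.IsSwap) : reflLen σ ≤ l.length :=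
  Nat.sInf_le ⟨l, h1, rfl, h2⟩

lemma rk_le_reflLen (σ : Equiv.Perm (Fin m)) : rk σ ≤ reflLen σ := by
  obtain ⟨l, h1, h2, h3⟩ := reflLen_spec σ
  rw [← h2, ← h1]
  exact rk_list_le l h3

lemma reflLen_mul_le (σ τ : Equiv.Perm (Fin m)) :
    reflLen (σ * τ) ≤ reflLen σ + reflLen τ := by
  obtain ⟨l1, h11, h12, h13⟩ := reflLen_spec σ
  obtain ⟨l2, h21, h22, h23⟩ := reflLen_spec τ
  have := reflLen_le (σ * τ) (l1 ++ l2) (by simp [h11, h21])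
    (fun t ht => by rcases List.mem_append.1 ht with h | h; exacts [h13 t h, h23 t h])
  simpa [h12, h22] using this

lemma reflLen_conj (g σ : Equiv.Perm (Fin m)) :
    reflLen (g * σ * g⁻¹) = reflLen σ := by
  have key : ∀ g σ : Equiv.Perm (Fin m), reflLen (g * σ * g⁻¹) ≤ reflLen σ := by
    intro g σ
    obtain ⟨l, h1, h2, h3⟩ := reflLen_spec σ
    have hprod : (l.map (MulAut.conj g)).prod = g * σ * g⁻¹ := by
      rw [← map_list_prod (MulAut.conj g) l]
      simp [h1]
    have hswap : ∀ t ∈ l.map (MulAut.conj g), Equiv.Perm.IsSwap t := by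
      intro t ht
      obtain ⟨s, hs, rfl⟩ := List.mem_map.1 ht
      simp only [MulAut.conj_apply]
      obtain ⟨a, b, hab, rfl⟩ := h3 s hs
      exact ⟨g a, g b, fun h => hab (g.injective h), (Equiv.swap_apply_apply g a b).symm⟩
    have := reflLen_le _ _ hprod hswap
    simpa [h2] using this
  refine le_antisymm (key g σ) ?_
  have := key g⁻¹ (g * σ * g⁻¹)
  simpa [mul_assoc] using this

lemma reflLen_revprod_le (l : List (Equiv.Perm (Fin m))) :
    reflLen l.reverse.prod ≤ (l.map reflLen).sum := by
  induction l with
  | nil =>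
    have : reflLen (1 : Equiv.Perm (Fin m)) ≤ 0 := reflLen_le 1 [] (by simp) (by simp)
    simpa using this
  | cons a l ih =>
    simp only [List.reverse_cons, List.prod_append, List.prod_cons, List.prod_nil, mul_one,
      List.map_cons, List.sum_cons]
    calc reflLen (l.reverse.prod * a) ≤ reflLen l.reverse.prod + reflLen a :=
          reflLen_mul_le _ _
      _ ≤ (l.map reflLen).sum + reflLen a := Nat.add_le_add_right ih _
      _ = reflLen a + (l.map reflLen).sum := Nat.add_comm _ _

lemma rk_finRotate (n : ℕ) : rk (finRotate (n + 1)) = n := by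
  have hker : LinearMap.ker (Lmap (finRotate (n + 1))) =
      Submodule.span ℚ {(fun _ => 1 : Fin (n + 1) → ℚ)} := by
    apply le_antisymm
    · intro f hf
      have hstep : ∀ x : Fin (n + 1), f (x + 1) = f x := by
        intro x
        have := congrFun (LinearMap.mem_ker.1 hf) x
        rw [Lmap_apply] at this
        rw [finRotate_succ_apply] at this
        simp only [Pi.zero_apply] at this
        linarith
      have hconst : ∀ k : ℕ, ∀ h : k < n + 1, f ⟨k, h⟩ = f 0 := by
        intro k
        induction k with
        | zero => intro h; rfl
        | succ k ih =>
          intro h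
          have hk : k < n + 1 := Nat.lt_of_succ_lt h
          have : (⟨k, hk⟩ : Fin (n + 1)) + 1 = ⟨k + 1, h⟩ := by
            apply Fin.ext
            simp [Fin.add_def, Nat.mod_eq_of_lt h]
          rw [← this, hstep, ih hk]
      apply Submodule.mem_span_singleton.2
      refine ⟨f 0, ?_⟩
      funext x
      rcases x with ⟨k, hk⟩
      simp [hconst k hk]
    · rw [Submodule.span_singleton_le_iff_mem, LinearMap.mem_ker]
      funext x
      simp [Lmap_apply]
  have hrn : Module.finrank ℚ (LinearMap.ker (Lmap (finRotate (n + 1)))) = 1 := by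
    rw [hker]
    exact finrank_span_singleton (by
      intro h
      have := congrFun h 0
      norm_num at this)
  have := LinearMap.finrank_range_add_finrank_ker (Lmap (finRotate (n + 1)))
  rw [hrn] at this
  have htot : Module.finrank ℚ (Fin (n + 1) → ℚ) = n + 1 := by simp
  rw [htot] at this
  unfold rk
  omega

end aux

/-- In any reduced factorization σ₁σ₂⋯σ_k of a noncrossing permutation σ of Fin (n+1)
(an element below the Coxeter element c = finRotate (n+1) in absolute order), each factor is
itself a noncrossing permutation.  Products σ₁⋯σ_k are taken in left-to-right order. -/
theorem stmt14 (n : ℕ) (σ : Equiv.Perm (Fin (n + 1)))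
    (hσ : reflLen σ + reflLen (finRotate (n + 1) * σ⁻¹) = n)
    (l : List (Equiv.Perm (Fin (n + 1))))
    (hprod : l.reverse.prod = σ) (hred : (l.map reflLen).sum = reflLen σ) :
    ∀ τ ∈ l, reflLen τ + reflLen (finRotate (n + 1) * τ⁻¹) = n := by
  intro τ hτ
  set c := finRotate (n + 1) with hc
  -- lower bound
  have hlow : n ≤ reflLen τ + reflLen (c * τ⁻¹) := by
    have h1 : (n : ℕ) = rk c := (rk_finRotate n).symm
    have h2 : rk c ≤ rk (c * τ⁻¹) + rk τ := by
      have := rk_mul_le (c * τ⁻¹) τ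
      simpa [mul_assoc] using this
    have h3 : rk (c * τ⁻¹) ≤ reflLen (c * τ⁻¹) := rk_le_reflLen _
    have h4 : rk τ ≤ reflLen τ := rk_le_reflLen _
    omega
  -- upper bound
  obtain ⟨l1, l2, rfl⟩ := List.append_of_mem hτ
  have hsplit : σ = l2.reverse.prod * (τ * l1.reverse.prod) := by
    rw [← hprod]; simp [mul_assoc]
  set P1 := l1.reverse.prod with hP1
  set P2 := l2.reverse.prod with hP2
  have hsum : (l1.map reflLen).sum + (reflLen τ + (l2.map reflLen).sum) = reflLen σ := by
    simpa using hred
  have hS1 : reflLen P1 ≤ (l1.map reflLen).sum := reflLen_revprod_le l1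
  have hS2 : reflLen P2 ≤ (l2.map reflLen).sum := reflLen_revprod_le l2
  have hdecomp : c * τ⁻¹ = (c * σ⁻¹) * P2 * (τ * P1 * τ⁻¹) := by
    rw [hsplit]; group
  have hup : reflLen (c * τ⁻¹) ≤ reflLen (c * σ⁻¹) + reflLen P2 + reflLen P1 := by
    calc reflLen (c * τ⁻¹) = reflLen ((c * σ⁻¹) * P2 * (τ * P1 * τ⁻¹)) := by rw [hdecomp]
      _ ≤ reflLen ((c * σ⁻¹) * P2) + reflLen (τ * P1 * τ⁻¹) := reflLen_mul_le _ _
      _ ≤ reflLen (c * σ⁻¹) + reflLen P2 + reflLen P1 := by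
          have h1 : reflLen ((c * σ⁻¹) * P2) ≤ reflLen (c * σ⁻¹) + reflLen P2 :=
            reflLen_mul_le _ _
          have h2 : reflLen (τ * P1 * τ⁻¹) = reflLen P1 := reflLen_conj τ P1
          omega
  omega
end

section
/- If σ₁σ₂⋯σ_k = σ is a reduced factorization in a Coxeter group (reflection lengths add) and 1 ≤ i₁ < ⋯ < i_j ≤ k is any selection of positions, then there exists a reduced factorization of σ into k factors whose first j factors (in order) are σ_{i₁}, σ_{i₂}, …, σ_{i_j}, and another whose last j factors are these. -/
/-!
Conjugating a factor past its neighbour, `σσ' = σ'(σ'⁻¹σσ')`, keeps the product and the number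
of factors, and keeps the reflection length of each factor, since reflection length is a class
function. Moving every unselected factor to the right past the selected factors that follow it
gives a factorization that starts with the selection; moving the block of selected factors to the
end, conjugating the remaining factors by its product, gives one that ends with it.
-/

/-- The reflection length of an element of a Coxeter group: the minimal length of a
factorization into reflections. -/
noncomputable def coxReflLen {B W : Type*} [Group W] {M : CoxeterMatrix B}
    (cs : CoxeterSystem M W) (w : W) : ℕ :=
  sInf {k | ∃ l : List W, l.prod = w ∧ l.length = k ∧ ∀ t ∈ l, cs.IsReflection t}

section ClassFunction

variable {G M : Type*} [Group G] [AddCommMonoid M] {f : G → M}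

theorem sum_map_map_conj (hf : ∀ a g : G, f (a * g * a⁻¹) = f g) (a : G) (v : List G) :
    ((v.map (MulAut.conj a)).map f).sum = (v.map f).sum := by
  simp only [List.map_map, Function.comp_def, MulAut.conj_apply, hf]

theorem exists_prefix_of_sublist (hf : ∀ a g : G, f (a * g * a⁻¹) = f g) {s l : List G}
    (h : s.Sublist l) :
    ∃ t : List G, (s ++ t).prod = l.prod ∧ (s ++ t).length = l.length ∧
      ((s ++ t).map f).sum = (l.map f).sum := by
  induction h with
  | slnil => exact ⟨[], rfl, rfl, rfl⟩
  | @cons s l a _ ih =>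
    obtain ⟨t, hprod, hlen, hsum⟩ := ih
    have hfa : f (s.prod⁻¹ * a * s.prod) = f a := by simpa using hf s.prod⁻¹ a
    refine ⟨(s.prod⁻¹ * a * s.prod) :: t, ?_, ?_, ?_⟩
    · rw [List.prod_cons, ← hprod, List.prod_append, List.prod_append, List.prod_cons]
      group
    · simp only [List.length_append, List.length_cons] at hlen ⊢
      omega
    · simp only [List.map_append, List.sum_append, List.map_cons, List.sum_cons, hfa] at hsum ⊢
      rw [← hsum, add_left_comm]
  | @cons_cons s l a _ ih =>
    obtain ⟨t, hprod, hlen, hsum⟩ := ih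
    refine ⟨t, ?_, ?_, ?_⟩
    · rw [List.cons_append, List.prod_cons, List.prod_cons, hprod]
    · simpa using hlen
    · rw [List.cons_append, List.map_cons, List.sum_cons, hsum, List.map_cons, List.sum_cons]

theorem exists_suffix_of_sublist (hf : ∀ a g : G, f (a * g * a⁻¹) = f g) {s l : List G}
    (h : s.Sublist l) :
    ∃ t : List G, (t ++ s).prod = l.prod ∧ (t ++ s).length = l.length ∧
      ((t ++ s).map f).sum = (l.map f).sum := by
  obtain ⟨t, hprod, hlen, hsum⟩ := exists_prefix_of_sublist hf h
  refine ⟨t.map (MulAut.conj s.prod), ?_, ?_, ?_⟩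
  · rw [← hprod, List.prod_append, List.prod_append, ← map_list_prod, MulAut.conj_apply]
    group
  · simpa [add_comm] using hlen
  · rw [← hsum, List.map_append, List.sum_append, sum_map_map_conj hf, List.map_append,
      List.sum_append, add_comm]

end ClassFunction

theorem coxReflLen_conj {B W : Type*} [Group W] {M : CoxeterMatrix B} (cs : CoxeterSystem M W)
    (a w : W) : coxReflLen cs (a * w * a⁻¹) = coxReflLen cs w := by
  have conj_mem : ∀ (a w : W) (k : ℕ),
      (∃ l : List W, l.prod = w ∧ l.length = k ∧ ∀ t ∈ l, cs.IsReflection t) →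
      ∃ l : List W, l.prod = a * w * a⁻¹ ∧ l.length = k ∧ ∀ t ∈ l, cs.IsReflection t := by
    rintro a w k ⟨l, rfl, rfl, hl⟩
    exact ⟨l.map (MulAut.conj a), (map_list_prod _ _).symm, List.length_map _,
      by simpa using hl⟩
  unfold coxReflLen
  congr 1
  ext k
  exact ⟨fun h => by simpa [mul_assoc] using conj_mem a⁻¹ _ k h, conj_mem a w k⟩

/-- If σ₁σ₂⋯σ_k = σ is a reduced factorization in a Coxeter group (reflection lengths add)
and a subsequence of the factors is selected, then there is a reduced factorization of σ into
k factors whose first factors (in order) are the selected ones, and another whose last factors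
are the selected ones. -/
theorem stmt15 {B W : Type*} [Group W] {M : CoxeterMatrix B} (cs : CoxeterSystem M W)
    (l : List W) (hred : (l.map (coxReflLen cs)).sum = coxReflLen cs l.prod)
    (s : List W) (hs : s.Sublist l) :
    (∃ l₁ : List W, l₁.prod = l.prod ∧ l₁.length = l.length ∧
      (l₁.map (coxReflLen cs)).sum = coxReflLen cs l.prod ∧ l₁.take s.length = s) ∧
    (∃ l₂ : List W, l₂.prod = l.prod ∧ l₂.length = l.length ∧
      (l₂.map (coxReflLen cs)).sum = coxReflLen cs l.prod ∧
      l₂.drop (l.length - s.length) = s) := by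
  constructor
  · obtain ⟨t, hprod, hlen, hsum⟩ := exists_prefix_of_sublist (coxReflLen_conj cs) hs
    exact ⟨s ++ t, hprod, hlen, hsum.trans hred, List.take_left⟩
  · obtain ⟨t, hprod, hlen, hsum⟩ := exists_suffix_of_sublist (coxReflLen_conj cs) hs
    refine ⟨t ++ s, hprod, hlen, hsum.trans hred, List.drop_left' ?_⟩
    rw [← hlen, List.length_append, Nat.add_sub_cancel]
end
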